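/- arXiv:1708.00243 — 7 statements merged into one kernel-verified Lean document; each statement's English description precedes it below -/
import Mathlib

section
/- Let m ∈ (0,4] and α > 0. Consider a continuously differentiable solution X = (Φ, W, Q, Z) : [ξ₀, ξ₁] → ℝ⁴ of the system Φ' = Φ(W − 4/m), W' = Q/Φ^{m/3} + W(1−W), Q' = (2/3 + (m−3)W/3)·Q + Z/Φ^{m/3}, Z' = α(W−1)/Φ^{m/3} + (1/3 − (m+3)W/3)·Z, with Φ > 0 on [ξ₀, ξ₁]. If Φ(ξ₀) > 0, W(ξ₀) > 1, Q(ξ₀) > 0 and Z(ξ₀) > 0, then Φ(ξ) > 0, W(ξ) > 1, Q(ξ) > 0 and Z(ξ) > 0 for every ξ ∈ [ξ₀, ξ₁]. Likewise, if Φ(ξ₀) > 0, W(ξ₀) < 1, Q(ξ₀) < 0 and Z(ξ₀) < 0, then Φ(ξ) > 0, W(ξ) < 1, Q(ξ) < 0 and Z(ξ) < 0 for every ξ ∈ [ξ₀, ξ₁]. -/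
open Set Filter Topology MeasureTheory

noncomputable section

/-- `f` is four-times continuously differentiable on `s`, with successive
derivatives `f1`, `f2`, `f3`, `f4`. -/
def C4On (s : Set ℝ) (f f1 f2 f3 f4 : ℝ → ℝ) : Prop :=
  (∀ y ∈ s, HasDerivWithinAt f (f1 y) s y) ∧
  (∀ y ∈ s, HasDerivWithinAt f1 (f2 y) s y) ∧
  (∀ y ∈ s, HasDerivWithinAt f2 (f3 y) s y) ∧
  (∀ y ∈ s, HasDerivWithinAt f3 (f4 y) s y) ∧
  ContinuousOn f4 s

/-- The self-similar profile ODE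
`α (f − y f') + m f^(m−1) f' f''' + f^m f'''' = 0` on the set `s`,
for a function `f` with successive derivatives `f1`, `f3`, `f4`. -/
def ProfileODE (m α : ℝ) (s : Set ℝ) (f f1 f3 f4 : ℝ → ℝ) : Prop :=
  ∀ y ∈ s,
    α * (f y - y * f1 y) + m * f y ^ (m - 1) * f1 y * f3 y + f y ^ m * f4 y = 0

/-!
With `u = W - 1` the equations for `(W, Q, Z)` become the linear system
`u' = -W u + Q / Φ^(m/3)`, `Q' = (2/3 + (m-3)/3 W) Q + Z / Φ^(m/3)`,
`Z' = α u / Φ^(m/3) + (1/3 - (m+3)/3 W) Z`, which is cooperative: every off-diagonal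
coefficient is nonnegative. For such a system the open positive orthant is forward invariant:
up to the first time `t` at which a component vanishes all components are nonnegative, so each
component `f` satisfies `f' ≥ p f` with `p` continuous, and an integrating factor gives
`f t > 0`. By linearity the negative orthant is invariant as well.
-/

open Real

theorem pos_of_hasDerivWithinAt_of_mul_le {σ τ : ℝ} {v v' p : ℝ → ℝ}
    (hv : ∀ x ∈ Icc σ τ, HasDerivWithinAt v (v' x) (Icc σ τ) x)
    (hp : ContinuousOn p (Icc σ τ)) (hv_nonneg : ∀ x ∈ Icc σ τ, 0 ≤ v x)
    (hv' : ∀ x ∈ Icc σ τ, p x * v x ≤ v' x) (hσ : 0 < v σ) :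
    ∀ x ∈ Icc σ τ, 0 < v x := by
  obtain ⟨k, hk⟩ := isCompact_Icc.bddBelow_image hp
  have hmono : MonotoneOn (fun x => v x * exp (-k * x)) (Icc σ τ) := by
    refine monotoneOn_of_hasDerivWithinAt_nonneg (convex_Icc σ τ)
      (f' := fun x => (v' x - k * v x) * exp (-k * x)) ?_ (fun x hx => ?_) (fun x hx => ?_)
    · exact (HasDerivWithinAt.continuousOn hv).mul (by fun_prop)
    · have hexp := ((hasDerivAt_id' x).const_mul (-k)).exp
      exact (((hv x (interior_subset hx)).mono interior_subset).mul
        hexp.hasDerivWithinAt).congr_deriv (by ring)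
    · have hx' := interior_subset hx
      have := mul_le_mul_of_nonneg_right (hk (mem_image_of_mem p hx')) (hv_nonneg x hx')
      exact mul_nonneg (by linarith [hv' x hx']) (exp_pos _).le
  intro x hx
  have hσx := hmono ⟨le_rfl, hx.1.trans hx.2⟩ hx hx.1
  exact pos_of_mul_pos_left ((by positivity : 0 < v σ * exp (-k * σ)).trans_le hσx) (exp_pos _).le

theorem ContinuousOn.pos_of_forall_nonneg_imp_pos {σ τ : ℝ} {f : ℝ → ℝ}
    (hf : ContinuousOn f (Icc σ τ)) (hσ : 0 < f σ)
    (hstep : ∀ t ∈ Icc σ τ, (∀ x ∈ Icc σ t, 0 ≤ f x) → 0 < f t) :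
    ∀ x ∈ Icc σ τ, 0 < f x := by
  by_contra! hbad
  obtain ⟨t, ⟨ht, ht0⟩, hmin⟩ : ∃ t, IsLeast (Icc σ τ ∩ f ⁻¹' Iic 0) t := by
    obtain ⟨x, hx, hx0⟩ := hbad
    exact (isCompact_Icc.of_isClosed_subset (hf.preimage_isClosed_of_isClosed isClosed_Icc
      isClosed_Iic) inter_subset_left).exists_isLeast ⟨x, hx, hx0⟩
  have hσt : σ < t := ht.1.lt_of_ne (by rintro rfl; exact (lt_of_lt_of_le hσ ht0).false)
  have hpos : ∀ x ∈ Ico σ t, 0 < f x := fun x hx => not_le.1 fun hx0 =>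
    (hmin ⟨⟨hx.1, hx.2.le.trans ht.2⟩, hx0⟩).not_gt hx.2
  refine (hstep t ht fun x hx => ?_).not_ge ht0
  rw [← closure_Ico hσt.ne] at hx
  have hsub : Ico σ t ⊆ Icc σ τ := fun y hy => ⟨hy.1, hy.2.le.trans ht.2⟩
  exact continuousWithinAt_const.closure_le hx
    ((hf x (closure_minimal hsub isClosed_Icc hx)).mono hsub) fun y hy => (hpos y hy).le

section CooperativeSystem

variable {σ τ : ℝ} {u v w p q r a b c : ℝ → ℝ}

theorem cooperative_system_pos
    (hu : ∀ x ∈ Icc σ τ, HasDerivWithinAt u (p x * u x + a x * v x) (Icc σ τ) x)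
    (hv : ∀ x ∈ Icc σ τ, HasDerivWithinAt v (q x * v x + b x * w x) (Icc σ τ) x)
    (hw : ∀ x ∈ Icc σ τ, HasDerivWithinAt w (c x * u x + r x * w x) (Icc σ τ) x)
    (hp : ContinuousOn p (Icc σ τ)) (hq : ContinuousOn q (Icc σ τ))
    (hr : ContinuousOn r (Icc σ τ)) (ha : ∀ x ∈ Icc σ τ, 0 ≤ a x)
    (hb : ∀ x ∈ Icc σ τ, 0 ≤ b x) (hc : ∀ x ∈ Icc σ τ, 0 ≤ c x)
    (hu0 : 0 < u σ) (hv0 : 0 < v σ) (hw0 : 0 < w σ) :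
    ∀ x ∈ Icc σ τ, 0 < u x ∧ 0 < v x ∧ 0 < w x := by
  have hcont : ContinuousOn (fun x => min (u x) (min (v x) (w x))) (Icc σ τ) :=
    (HasDerivWithinAt.continuousOn hu).inf
      ((HasDerivWithinAt.continuousOn hv).inf (HasDerivWithinAt.continuousOn hw))
  have hmin := hcont.pos_of_forall_nonneg_imp_pos
    (lt_min hu0 (lt_min hv0 hw0)) fun t ht hnonneg => ?_
  · simpa only [lt_min_iff] using hmin
  have hsub : Icc σ t ⊆ Icc σ τ := Icc_subset_Icc_right ht.2
  have hrestrict {f f' : ℝ → ℝ} (hf : ∀ x ∈ Icc σ τ, HasDerivWithinAt f (f' x) (Icc σ τ) x) :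
      ∀ x ∈ Icc σ t, HasDerivWithinAt f (f' x) (Icc σ t) x :=
    fun x hx => (hf x (hsub hx)).mono hsub
  simp only [le_min_iff] at hnonneg
  have htt : t ∈ Icc σ t := ⟨ht.1, le_rfl⟩
  refine lt_min ?_ (lt_min ?_ ?_)
  · refine pos_of_hasDerivWithinAt_of_mul_le (hrestrict hu) (hp.mono hsub)
      (fun x hx => (hnonneg x hx).1) (fun x hx => ?_) hu0 t htt
    exact le_add_of_nonneg_right (mul_nonneg (ha x (hsub hx)) (hnonneg x hx).2.1)
  · refine pos_of_hasDerivWithinAt_of_mul_le (hrestrict hv) (hq.mono hsub)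
      (fun x hx => (hnonneg x hx).2.1) (fun x hx => ?_) hv0 t htt
    exact le_add_of_nonneg_right (mul_nonneg (hb x (hsub hx)) (hnonneg x hx).2.2)
  · refine pos_of_hasDerivWithinAt_of_mul_le (hrestrict hw) (hr.mono hsub)
      (fun x hx => (hnonneg x hx).2.2) (fun x hx => ?_) hw0 t htt
    exact le_add_of_nonneg_left (mul_nonneg (hc x (hsub hx)) (hnonneg x hx).1)

theorem cooperative_system_neg
    (hu : ∀ x ∈ Icc σ τ, HasDerivWithinAt u (p x * u x + a x * v x) (Icc σ τ) x)
    (hv : ∀ x ∈ Icc σ τ, HasDerivWithinAt v (q x * v x + b x * w x) (Icc σ τ) x)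
    (hw : ∀ x ∈ Icc σ τ, HasDerivWithinAt w (c x * u x + r x * w x) (Icc σ τ) x)
    (hp : ContinuousOn p (Icc σ τ)) (hq : ContinuousOn q (Icc σ τ))
    (hr : ContinuousOn r (Icc σ τ)) (ha : ∀ x ∈ Icc σ τ, 0 ≤ a x)
    (hb : ∀ x ∈ Icc σ τ, 0 ≤ b x) (hc : ∀ x ∈ Icc σ τ, 0 ≤ c x)
    (hu0 : u σ < 0) (hv0 : v σ < 0) (hw0 : w σ < 0) :
    ∀ x ∈ Icc σ τ, u x < 0 ∧ v x < 0 ∧ w x < 0 := by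
  have hneg := cooperative_system_pos (u := -u) (v := -v) (w := -w)
    (fun x hx => (hu x hx).neg.congr_deriv (by simp only [Pi.neg_apply]; ring))
    (fun x hx => (hv x hx).neg.congr_deriv (by simp only [Pi.neg_apply]; ring))
    (fun x hx => (hw x hx).neg.congr_deriv (by simp only [Pi.neg_apply]; ring))
    hp hq hr ha hb hc (neg_pos.2 hu0) (neg_pos.2 hv0) (neg_pos.2 hw0)
  simpa only [Pi.neg_apply, neg_pos] using hneg

end CooperativeSystem

theorem stmt3_general (m α : ℝ) (hα : 0 < α)
    (ξ₀ ξ₁ : ℝ) (Φ W Q Z : ℝ → ℝ)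
    (hΦpos : ∀ ξ ∈ Icc ξ₀ ξ₁, 0 < Φ ξ)
    (hW : ∀ ξ ∈ Icc ξ₀ ξ₁,
      HasDerivWithinAt W (Q ξ / Φ ξ ^ (m / 3) + W ξ * (1 - W ξ)) (Icc ξ₀ ξ₁) ξ)
    (hQ : ∀ ξ ∈ Icc ξ₀ ξ₁,
      HasDerivWithinAt Q ((2 / 3 + (m - 3) / 3 * W ξ) * Q ξ + Z ξ / Φ ξ ^ (m / 3))
        (Icc ξ₀ ξ₁) ξ)
    (hZ : ∀ ξ ∈ Icc ξ₀ ξ₁,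
      HasDerivWithinAt Z (α * (W ξ - 1) / Φ ξ ^ (m / 3) + (1 / 3 - (m + 3) / 3 * W ξ) * Z ξ)
        (Icc ξ₀ ξ₁) ξ) :
    ((0 < Φ ξ₀ ∧ 1 < W ξ₀ ∧ 0 < Q ξ₀ ∧ 0 < Z ξ₀) →
      ∀ ξ ∈ Icc ξ₀ ξ₁, 0 < Φ ξ ∧ 1 < W ξ ∧ 0 < Q ξ ∧ 0 < Z ξ) ∧
    ((0 < Φ ξ₀ ∧ W ξ₀ < 1 ∧ Q ξ₀ < 0 ∧ Z ξ₀ < 0) →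
      ∀ ξ ∈ Icc ξ₀ ξ₁, 0 < Φ ξ ∧ W ξ < 1 ∧ Q ξ < 0 ∧ Z ξ < 0) := by
  have hWc := HasDerivWithinAt.continuousOn hW
  have hPinv : ∀ ξ ∈ Icc ξ₀ ξ₁, 0 ≤ (Φ ξ ^ (m / 3))⁻¹ := fun ξ hξ =>
    inv_nonneg.2 (rpow_nonneg (hΦpos ξ hξ).le _)
  have hW' : ∀ ξ ∈ Icc ξ₀ ξ₁, HasDerivWithinAt (fun ξ => W ξ - 1)
      (-W ξ * (W ξ - 1) + (Φ ξ ^ (m / 3))⁻¹ * Q ξ) (Icc ξ₀ ξ₁) ξ := fun ξ hξ =>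
    ((hW ξ hξ).sub_const 1).congr_deriv (by ring)
  have hQ' : ∀ ξ ∈ Icc ξ₀ ξ₁, HasDerivWithinAt Q
      ((2 / 3 + (m - 3) / 3 * W ξ) * Q ξ + (Φ ξ ^ (m / 3))⁻¹ * Z ξ) (Icc ξ₀ ξ₁) ξ :=
    fun ξ hξ => (hQ ξ hξ).congr_deriv (by ring)
  have hZ' : ∀ ξ ∈ Icc ξ₀ ξ₁, HasDerivWithinAt Z
      (α * (Φ ξ ^ (m / 3))⁻¹ * (W ξ - 1) + (1 / 3 - (m + 3) / 3 * W ξ) * Z ξ) (Icc ξ₀ ξ₁) ξ :=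
    fun ξ hξ => (hZ ξ hξ).congr_deriv (by ring)
  have hα' : ∀ ξ ∈ Icc ξ₀ ξ₁, 0 ≤ α * (Φ ξ ^ (m / 3))⁻¹ := fun ξ hξ =>
    mul_nonneg hα.le (hPinv ξ hξ)
  constructor
  · rintro ⟨-, hW0, hQ0, hZ0⟩ ξ hξ
    obtain ⟨hWξ, hQξ, hZξ⟩ := cooperative_system_pos hW' hQ' hZ' (by fun_prop) (by fun_prop)
      (by fun_prop) hPinv hPinv hα' (sub_pos.2 hW0) hQ0 hZ0 ξ hξ
    exact ⟨hΦpos ξ hξ, sub_pos.1 hWξ, hQξ, hZξ⟩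
  · rintro ⟨-, hW0, hQ0, hZ0⟩ ξ hξ
    obtain ⟨hWξ, hQξ, hZξ⟩ := cooperative_system_neg hW' hQ' hZ' (by fun_prop) (by fun_prop)
      (by fun_prop) hPinv hPinv hα' (sub_neg.2 hW0) hQ0 hZ0 ξ hξ
    exact ⟨hΦpos ξ hξ, sub_neg.1 hWξ, hQξ, hZξ⟩

theorem stmt3 (m α : ℝ) (hm0 : 0 < m) (hm4 : m ≤ 4) (hα : 0 < α)
    (ξ₀ ξ₁ : ℝ) (hξ : ξ₀ ≤ ξ₁) (Φ W Q Z : ℝ → ℝ)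
    (hΦpos : ∀ ξ ∈ Icc ξ₀ ξ₁, 0 < Φ ξ)
    (hΦ : ∀ ξ ∈ Icc ξ₀ ξ₁,
      HasDerivWithinAt Φ (Φ ξ * (W ξ - 4 / m)) (Icc ξ₀ ξ₁) ξ)
    (hW : ∀ ξ ∈ Icc ξ₀ ξ₁,
      HasDerivWithinAt W (Q ξ / Φ ξ ^ (m / 3) + W ξ * (1 - W ξ)) (Icc ξ₀ ξ₁) ξ)
    (hQ : ∀ ξ ∈ Icc ξ₀ ξ₁,
      HasDerivWithinAt Q ((2 / 3 + (m - 3) / 3 * W ξ) * Q ξ + Z ξ / Φ ξ ^ (m / 3))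
        (Icc ξ₀ ξ₁) ξ)
    (hZ : ∀ ξ ∈ Icc ξ₀ ξ₁,
      HasDerivWithinAt Z (α * (W ξ - 1) / Φ ξ ^ (m / 3) + (1 / 3 - (m + 3) / 3 * W ξ) * Z ξ)
        (Icc ξ₀ ξ₁) ξ) :
    ((0 < Φ ξ₀ ∧ 1 < W ξ₀ ∧ 0 < Q ξ₀ ∧ 0 < Z ξ₀) →
      ∀ ξ ∈ Icc ξ₀ ξ₁, 0 < Φ ξ ∧ 1 < W ξ ∧ 0 < Q ξ ∧ 0 < Z ξ) ∧
    ((0 < Φ ξ₀ ∧ W ξ₀ < 1 ∧ Q ξ₀ < 0 ∧ Z ξ₀ < 0) →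
      ∀ ξ ∈ Icc ξ₀ ξ₁, 0 < Φ ξ ∧ W ξ < 1 ∧ Q ξ < 0 ∧ Z ξ < 0) :=
  stmt3_general m α hα ξ₀ ξ₁ Φ W Q Z hΦpos hW hQ hZ
end
end

section
/- Let m ∈ (0,4], α > 0, and let f : [0,∞) → ℝ be four-times continuously differentiable with f(y) > 0 for all y ≥ 0 and f(0) = 1, satisfying the self-similar profile equation α·(f − y f') + m f^{m−1} f' f''' + f^m f'''' = 0 on (0,∞). If at some y₀ > 0 the Σ₊ condition holds (y₀·f'(y₀) > f(y₀), f''(y₀) > 0, f'''(y₀) > 0), then there exists c > 0 such that f(y) ≥ c·y² for all y ∈ (0,∞). -/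
/-!
Along the flow the three quantities `y f' − f`, `f''` and `f^m f'''` have derivatives
`y f''`, `f'''` and (by the profile equation) `α (y f' − f)`, each of which is positive as soon as
the Σ₊ condition holds. So once Σ₊ holds it can never be lost: none of the three quantities can be
the first to reach zero. In particular `f'' ≥ f''(y₀) > 0` beyond `y₀`, and as `f(y₀), f'(y₀) > 0`
this forces quadratic growth at infinity; positivity and compactness handle `[0, 2 y₀]`.
-/

open Set Filter Topology MeasureTheory

noncomputable section

theorem forall_ge_of_eventually_of_forall_Ico {p : ℝ → Prop} {a : ℝ} (ha : p a)
    (hnhds : ∀ x ≥ a, p x → ∀ᶠ y in 𝓝 x, p y)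
    (hlim : ∀ b > a, (∀ x ∈ Ico a b, p x) → p b) :
    ∀ x ≥ a, p x := by
  by_contra! hfail
  set B := {x | a ≤ x ∧ ¬p x}
  have hBne : B.Nonempty := hfail
  have hBbdd : BddBelow B := ⟨a, fun x hx => hx.1⟩
  set T := sInf B
  have haT : a ≤ T := le_csInf hBne fun x hx => hx.1
  have hbelow : ∀ x ∈ Ico a T, p x := fun x hx => by
    by_contra hpx
    exact (csInf_le hBbdd ⟨hx.1, hpx⟩).not_gt hx.2
  have hT : p T := by
    rcases haT.eq_or_lt with haT | haT
    · exact haT ▸ ha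
    · exact hlim T haT hbelow
  obtain ⟨u, hTu, hu⟩ : ∃ u, T < u ∧ Ico T u ⊆ {x | p x} :=
    exists_Ico_subset_of_mem_nhds (hnhds T haT hT) ⟨T + 1, by linarith⟩
  have huT : u ≤ T := le_csInf hBne fun x hx => by
    by_contra! hxu
    exact hx.2 (hu ⟨csInf_le hBbdd hx, hxu⟩)
  linarith

theorem le_of_hasDerivAt_of_nonneg {g g' : ℝ → ℝ} {a b : ℝ} (hab : a ≤ b)
    (hg : ∀ x ∈ Icc a b, HasDerivAt g (g' x) x) (hg' : ∀ x ∈ Ioo a b, 0 ≤ g' x) :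
    g a ≤ g b := by
  have hmono : MonotoneOn g (Icc a b) := by
    refine monotoneOn_of_hasDerivWithinAt_nonneg (f' := g') (convex_Icc a b)
      (fun x hx => (hg x hx).continuousAt.continuousWithinAt) (fun x hx => ?_) (fun x hx => ?_)
    · rw [interior_Icc] at hx ⊢
      exact (hg x (Ioo_subset_Icc_self hx)).hasDerivWithinAt
    · rw [interior_Icc] at hx
      exact hg' x hx
  exact hmono (left_mem_Icc.2 hab) (right_mem_Icc.2 hab) hab

theorem mul_sq_le_of_le_deriv2 {f f' f'' : ℝ → ℝ} {a b : ℝ}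
    (hf : ∀ x ≥ a, HasDerivAt f (f' x) x) (hf' : ∀ x ≥ a, HasDerivAt f' (f'' x) x)
    (hb : ∀ x ≥ a, b ≤ f'' x) (h0 : 0 ≤ f a) (h1 : 0 ≤ f' a) :
    ∀ x ≥ a, b / 2 * (x - a) ^ 2 ≤ f x := by
  have hslope : ∀ x ≥ a, 0 ≤ f' x - b * (x - a) := fun x hx => by
    have := le_of_hasDerivAt_of_nonneg (g := fun y => f' y - b * (y - a)) hx
      (fun y hy => (hf' y hy.1).sub (((hasDerivAt_id y).sub_const a).const_mul b) |>.congr_deriv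
        (by ring))
      (fun y hy => sub_nonneg.2 (hb y hy.1.le))
    simp only [sub_self, mul_zero, sub_zero] at this
    linarith
  intro x hx
  have := le_of_hasDerivAt_of_nonneg (g := fun y => f y - b / 2 * (y - a) ^ 2) hx
    (fun y hy => (hf y hy.1).sub ((((hasDerivAt_id' y).sub_const a).pow 2).const_mul (b / 2))
      |>.congr_deriv (by ring))
    (fun y hy => hslope y hy.1.le)
  simp only [sub_self, ne_eq, OfNat.ofNat_ne_zero, not_false_eq_true, zero_pow, mul_zero,
    sub_zero] at this
  linarith

theorem exists_mul_sq_le_of_pos_of_quadratic {f : ℝ → ℝ} {a k : ℝ} (ha : 0 < a) (hk : 0 < k)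
    (hcont : ContinuousOn f (Icc 0 (2 * a))) (hpos : ∀ y ∈ Icc 0 (2 * a), 0 < f y)
    (hquad : ∀ y ≥ a, k * (y - a) ^ 2 ≤ f y) :
    ∃ c > 0, ∀ y > 0, c * y ^ 2 ≤ f y := by
  obtain ⟨x₀, hx₀, hmin⟩ := isCompact_Icc.exists_isMinOn
    (nonempty_Icc.2 (by linarith : (0 : ℝ) ≤ 2 * a)) hcont
  have hε : 0 < f x₀ := hpos x₀ hx₀
  refine ⟨min (k / 4) (f x₀ / (4 * a ^ 2)), by positivity, fun y hy => ?_⟩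
  rcases le_or_gt y (2 * a) with hy' | hy'
  · calc min (k / 4) (f x₀ / (4 * a ^ 2)) * y ^ 2
          ≤ f x₀ / (4 * a ^ 2) * (4 * a ^ 2) := by
            gcongr
            · exact min_le_right _ _
            · nlinarith
      _ = f x₀ := div_mul_cancel₀ _ (by positivity)
      _ ≤ f y := hmin ⟨hy.le, hy'⟩
  · calc min (k / 4) (f x₀ / (4 * a ^ 2)) * y ^ 2
          ≤ k / 4 * y ^ 2 := by gcongr; exact min_le_left _ _
      _ = k * (y / 2) ^ 2 := by ring
      _ ≤ k * (y - a) ^ 2 := by gcongr; linarith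
      _ ≤ f y := hquad y (by linarith)

theorem C4On.hasDerivAt {s : Set ℝ} {f f1 f2 f3 f4 : ℝ → ℝ} (h : C4On s f f1 f2 f3 f4) {y : ℝ}
    (hy : s ∈ 𝓝 y) :
    HasDerivAt f (f1 y) y ∧ HasDerivAt f1 (f2 y) y ∧ HasDerivAt f2 (f3 y) y ∧
      HasDerivAt f3 (f4 y) y :=
  have hys := mem_of_mem_nhds hy
  ⟨(h.1 y hys).hasDerivAt hy, (h.2.1 y hys).hasDerivAt hy, (h.2.2.1 y hys).hasDerivAt hy,
    (h.2.2.2.1 y hys).hasDerivAt hy⟩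

theorem ProfileODE.hasDerivAt_rpow_mul {m α : ℝ} {s : Set ℝ} {f f1 f3 f4 : ℝ → ℝ}
    (hODE : ProfileODE m α s f f1 f3 f4) {y : ℝ} (hy : y ∈ s) (hfy : f y ≠ 0)
    (hf : HasDerivAt f (f1 y) y) (hf3 : HasDerivAt f3 (f4 y) y) :
    HasDerivAt (fun t => f t ^ m * f3 t) (α * (y * f1 y - f y)) y :=
  ((hf.rpow_const (Or.inl hfy)).mul hf3).congr_deriv (by linear_combination hODE y hy)

def SigmaPlus (f f1 f2 f3 : ℝ → ℝ) (y : ℝ) : Prop :=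
  f y < y * f1 y ∧ 0 < f2 y ∧ 0 < f3 y

theorem SigmaPlus.forall_ge {m α : ℝ} {f f1 f2 f3 f4 : ℝ → ℝ} (hα : 0 < α)
    (hODE : ProfileODE m α (Ioi 0) f f1 f3 f4)
    (hf : ∀ y > 0, HasDerivAt f (f1 y) y) (hf1 : ∀ y > 0, HasDerivAt f1 (f2 y) y)
    (hf2 : ∀ y > 0, HasDerivAt f2 (f3 y) y) (hf3 : ∀ y > 0, HasDerivAt f3 (f4 y) y)
    (hpos : ∀ y > 0, 0 < f y) {y₀ : ℝ} (hy₀ : 0 < y₀) (h₀ : SigmaPlus f f1 f2 f3 y₀) :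
    ∀ y ≥ y₀, SigmaPlus f f1 f2 f3 y := by
  refine forall_ge_of_eventually_of_forall_Ico h₀ (fun x hx hsig => ?_) (fun b hb hsig => ?_)
  · have hx0 : 0 < x := hy₀.trans_le hx
    have hcf := (hf x hx0).continuousAt
    have hcf1 := (hf1 x hx0).continuousAt
    exact (hcf.eventually_lt (continuousAt_id.mul hcf1) hsig.1).and
      ((continuousAt_const.eventually_lt (hf2 x hx0).continuousAt hsig.2.1).and
        (continuousAt_const.eventually_lt (hf3 x hx0).continuousAt hsig.2.2))
  · have hIcc : ∀ x ∈ Icc y₀ b, 0 < x := fun x hx => hy₀.trans_le hx.1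
    have hIoo : ∀ x ∈ Ioo y₀ b, SigmaPlus f f1 f2 f3 x := fun x hx => hsig x ⟨hx.1.le, hx.2⟩
    have hflux : f y₀ ^ m * f3 y₀ ≤ f b ^ m * f3 b :=
      le_of_hasDerivAt_of_nonneg hb.le
        (fun x hx => hODE.hasDerivAt_rpow_mul (hIcc x hx) (hpos x (hIcc x hx)).ne'
          (hf x (hIcc x hx)) (hf3 x (hIcc x hx)))
        (fun x hx => by nlinarith [(hIoo x hx).1])
    have hcurv : f2 y₀ ≤ f2 b :=
      le_of_hasDerivAt_of_nonneg hb.le (fun x hx => hf2 x (hIcc x hx))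
        (fun x hx => (hIoo x hx).2.2.le)
    have hexcess : y₀ * f1 y₀ - f y₀ ≤ b * f1 b - f b :=
      le_of_hasDerivAt_of_nonneg (g := fun y => y * f1 y - f y) hb.le
        (fun x hx => ((hasDerivAt_id' x).mul (hf1 x (hIcc x hx))).sub (hf x (hIcc x hx))
          |>.congr_deriv (by ring))
        (fun x hx => (mul_pos (hIcc x (Ioo_subset_Icc_self hx)) (hIoo x hx).2.1).le)
    have hfm : 0 < f y₀ ^ m * f3 y₀ :=
      mul_pos (Real.rpow_pos_of_pos (hpos y₀ hy₀) m) h₀.2.2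
    refine ⟨by linarith [h₀.1], h₀.2.1.trans_le hcurv, ?_⟩
    exact pos_of_mul_pos_right (hfm.trans_le hflux)
      (Real.rpow_nonneg (hpos b (hy₀.trans hb)).le m)

theorem stmt4_general (m α : ℝ) (hα : 0 < α)
    (f f1 f2 f3 f4 : ℝ → ℝ)
    (hC4 : C4On (Ici 0) f f1 f2 f3 f4)
    (hpos : ∀ y ∈ Ici (0 : ℝ), 0 < f y)
    (hODE : ProfileODE m α (Ioi 0) f f1 f3 f4)
    (y₀ : ℝ) (hy₀ : 0 < y₀)
    (hSigmaPlus : f y₀ < y₀ * f1 y₀ ∧ 0 < f2 y₀ ∧ 0 < f3 y₀) :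
    ∃ c > (0 : ℝ), ∀ y > (0 : ℝ), c * y ^ 2 ≤ f y := by
  have hderiv : ∀ y : ℝ, 0 < y → _ := fun y hy => hC4.hasDerivAt (Ici_mem_nhds hy)
  have hposIoi : ∀ y > 0, 0 < f y := fun y hy => hpos y (le_of_lt hy)
  have hsig := SigmaPlus.forall_ge hα hODE (fun y hy => (hderiv y hy).1)
    (fun y hy => (hderiv y hy).2.1) (fun y hy => (hderiv y hy).2.2.1)
    (fun y hy => (hderiv y hy).2.2.2) hposIoi hy₀ hSigmaPlus
  have hcurv : ∀ y ≥ y₀, f2 y₀ ≤ f2 y := fun y hy =>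
    le_of_hasDerivAt_of_nonneg hy (fun x hx => (hderiv x (hy₀.trans_le hx.1)).2.2.1)
      (fun x hx => (hsig x hx.1.le).2.2.le)
  have hslope : 0 ≤ f1 y₀ := by nlinarith [hposIoi y₀ hy₀]
  have hquad := mul_sq_le_of_le_deriv2 (fun y hy => (hderiv y (hy₀.trans_le hy)).1)
    (fun y hy => (hderiv y (hy₀.trans_le hy)).2.1) hcurv (hposIoi y₀ hy₀).le hslope
  exact exists_mul_sq_le_of_pos_of_quadratic hy₀ (half_pos hSigmaPlus.2.1)
    (ContinuousOn.mono (fun y hy => (hC4.1 y hy).continuousWithinAt) Icc_subset_Ici_self)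
    (fun y hy => hpos y hy.1) hquad

theorem stmt4 (m α : ℝ) (hm0 : 0 < m) (hm4 : m ≤ 4) (hα : 0 < α)
    (f f1 f2 f3 f4 : ℝ → ℝ)
    (hC4 : C4On (Ici 0) f f1 f2 f3 f4)
    (hpos : ∀ y ∈ Ici (0 : ℝ), 0 < f y)
    (hf0 : f 0 = 1)
    (hODE : ProfileODE m α (Ioi 0) f f1 f3 f4)
    (y₀ : ℝ) (hy₀ : 0 < y₀)
    (hSigmaPlus : f y₀ < y₀ * f1 y₀ ∧ 0 < f2 y₀ ∧ 0 < f3 y₀) :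
    ∃ c > (0 : ℝ), ∀ y > (0 : ℝ), c * y ^ 2 ≤ f y :=
  stmt4_general m α hα f f1 f2 f3 f4 hC4 hpos hODE y₀ hy₀ hSigmaPlus
end
end

section
/- Let m ∈ (0,4], α > 0, and let f : [0, y_M) → ℝ (with 0 < y_M ≤ ∞) be four-times continuously differentiable with f > 0 on [0, y_M), satisfying the self-similar profile equation α·(f − y f') + m f^{m−1} f' f''' + f^m f'''' = 0 on (0, y_M), and suppose f admits no extension to a positive four-times continuously differentiable solution on a strictly larger interval [0, y_M') with y_M' > y_M. If at some y₀ ∈ (0, y_M) the Σ₋ condition holds (y₀·f'(y₀) < f(y₀), f''(y₀) < 0, f'''(y₀) < 0), then y_M < ∞ and f(y) → 0 as y → y_M from the left. -/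
open Set Filter Topology MeasureTheory

noncomputable section

/-!
Along a trajectory starting in Σ₋, `f'''` stays negative: at a first zero of `f'''` the quantity
`f - y f'`, which increases as long as `f'' < 0`, is still positive, so the equation forces
`f'''' < 0` there, which is impossible. Hence `f'' ≤ f''(y₀) < 0` and `f` is uniformly concave; on
an unbounded interval it would become negative, so `y_M < ∞`, and `f` has a limit `ℓ ≥ 0` at `y_M`.
If `ℓ > 0`, the conservation form `(f^m f''' - α y f)' = -2α f` of the equation makes `f'''`, and
then `f''` and `f'`, converge at `y_M`, and Picard–Lindelöf continues the solution past `y_M`,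
contradicting maximality.
-/

section Calculus

variable {φ ψ : ℝ → ℝ} {D : Set ℝ}

theorem Convex.monotoneOn_of_hasDerivAt_nonneg (hD : Convex ℝ D)
    (hd : ∀ x ∈ D, HasDerivAt φ (ψ x) x) (hψ : ∀ x ∈ D, 0 ≤ ψ x) : MonotoneOn φ D :=
  monotoneOn_of_hasDerivWithinAt_nonneg hD
    (fun x hx => (hd x hx).continuousAt.continuousWithinAt)
    (fun x hx => (hd x (interior_subset hx)).hasDerivWithinAt)
    (fun x hx => hψ x (interior_subset hx))

theorem Convex.antitoneOn_of_hasDerivAt_nonpos (hD : Convex ℝ D)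
    (hd : ∀ x ∈ D, HasDerivAt φ (ψ x) x) (hψ : ∀ x ∈ D, ψ x ≤ 0) : AntitoneOn φ D :=
  antitoneOn_of_hasDerivWithinAt_nonpos hD
    (fun x hx => (hd x hx).continuousAt.continuousWithinAt)
    (fun x hx => (hd x (interior_subset hx)).hasDerivWithinAt)
    (fun x hx => hψ x (interior_subset hx))

theorem Convex.image_sub_le_mul_sub_of_hasDerivAt_le (hD : Convex ℝ D)
    (hd : ∀ x ∈ D, HasDerivAt φ (ψ x) x) {K : ℝ} (hψ : ∀ x ∈ D, ψ x ≤ K)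
    {x y : ℝ} (hx : x ∈ D) (hy : y ∈ D) (hxy : x ≤ y) : φ y - φ x ≤ K * (y - x) := by
  have := hD.antitoneOn_of_hasDerivAt_nonpos (φ := fun t => φ t - K * t)
    (fun t ht => ((hd t ht).sub ((hasDerivAt_id t).const_mul K)).congr_deriv (by simp))
    (fun t ht => sub_nonpos.2 (hψ t ht)) hx hy hxy
  simp only at this
  linarith

theorem HasDerivAt.nonneg_of_nonpos_left {g : ℝ → ℝ} {g' a c : ℝ} (hg : HasDerivAt g g' c)
    (hac : a < c) (hc : g c = 0) (hneg : ∀ y ∈ Ioo a c, g y ≤ 0) : 0 ≤ g' := by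
  have hslope := hg.hasDerivWithinAt (s := Iio c)
  rw [hasDerivWithinAt_iff_tendsto_slope, sdiff_singleton_eq_self self_notMem_Iio] at hslope
  refine ge_of_tendsto hslope ?_
  filter_upwards [Ioo_mem_nhdsLT hac] with y hy
  rw [slope_def_field, hc, sub_zero]
  exact div_nonneg_of_nonpos (hneg y hy) (by linarith [hy.2])

theorem ContinuousOn.forall_neg_of_not_first_zero {g : ℝ → ℝ} {a b : ℝ}
    (hg : ContinuousOn g (Icc a b)) (ha : g a < 0)
    (hfirst : ∀ c ∈ Ioc a b, g c = 0 → (∀ y ∈ Ico a c, g y < 0) → False) :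
    ∀ y ∈ Icc a b, g y < 0 := by
  by_contra! hex
  set T := Icc a b ∩ g ⁻¹' Ici 0
  have hT : T.Nonempty := hex
  have hTbdd : BddBelow T := ⟨a, fun t ht => ht.1.1⟩
  obtain ⟨⟨hcab, hc0⟩, -⟩ :=
    (hg.preimage_isClosed_of_isClosed isClosed_Icc isClosed_Ici).isLeast_csInf hT hTbdd
  set c := sInf T
  have hbefore : ∀ y ∈ Ico a c, g y < 0 := fun y hy => by
    by_contra! h
    exact (csInf_le hTbdd ⟨⟨hy.1, hy.2.le.trans hcab.2⟩, h⟩).not_gt hy.2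
  have hac : a < c := hcab.1.lt_of_ne fun h => (h ▸ ha).not_ge hc0
  refine hfirst c ⟨hac, hcab.2⟩ (le_antisymm ?_ hc0) hbefore
  have hleft : ContinuousWithinAt g (Iio c) c :=
    (hg c hcab).mono_of_mem_nhdsWithin <| mem_of_superset (Ioo_mem_nhdsLT hac)
      (Ioo_subset_Icc_self.trans (Icc_subset_Icc_right hcab.2))
  refine le_of_tendsto hleft ?_
  filter_upwards [Ioo_mem_nhdsLT hac] with y hy
  exact (hbefore y ⟨hy.1.le, hy.2⟩).le

end Calculus

section EndpointLimits

variable {φ ψ : ℝ → ℝ} {a r : ℝ}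

theorem ContinuousOn.exists_abs_le_of_tendsto_nhdsLT {L : ℝ} (hφ : ContinuousOn φ (Ico a r))
    (hL : Tendsto φ (𝓝[<] r) (𝓝 L)) : ∃ C, ∀ y ∈ Ico a r, |φ y| ≤ C := by
  classical
  rcases lt_or_ge a r with har | hra
  swap
  · exact ⟨0, fun y hy => absurd (hy.1.trans_lt hy.2) hra.not_gt⟩
  have hcont : ContinuousOn (Function.update φ r L) (Icc a r) := by
    intro y hy
    rcases hy.2.lt_or_eq with hyr | rfl
    · rw [continuousWithinAt_update_of_ne hyr.ne]
      exact (hφ y ⟨hy.1, hyr⟩).mono_of_mem_nhdsWithin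
        (mem_nhdsWithin.2 ⟨Iio r, isOpen_Iio, hyr, fun z hz => ⟨hz.2.1, hz.1⟩⟩)
    · rw [continuousWithinAt_update_same]
      exact hL.mono_left (nhdsWithin_mono _ fun z hz => lt_of_le_of_ne hz.1.2 hz.2)
  obtain ⟨C, hC⟩ := isCompact_Icc.exists_bound_of_continuousOn hcont
  refine ⟨C, fun y hy => ?_⟩
  simpa [Function.update_of_ne hy.2.ne] using hC y (Ico_subset_Icc_self hy)

theorem exists_tendsto_nhdsLT_of_hasDerivAt_of_abs_le {C : ℝ} (har : a < r)
    (hd : ∀ y ∈ Ico a r, HasDerivAt φ (ψ y) y) (hψ : ∀ y ∈ Ico a r, |ψ y| ≤ C) :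
    ∃ L, Tendsto φ (𝓝[<] r) (𝓝 L) := by
  have hC : 0 ≤ C := (abs_nonneg _).trans (hψ a (left_mem_Ico.2 har))
  have hmono : MonotoneOn (fun y => φ y + C * y) (Ico a r) :=
    (convex_Ico a r).monotoneOn_of_hasDerivAt_nonneg (ψ := fun y => ψ y + C)
      (fun y hy => (hd y hy).add ((hasDerivAt_id y).const_mul C) |>.congr_deriv (by simp))
      (fun y hy => by linarith [neg_abs_le (ψ y), hψ y hy])
  have hbdd : BddAbove ((fun y => φ y + C * y) '' Ioo a r) := by
    refine ⟨φ a + C * a + 2 * C * (r - a), ?_⟩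
    rintro _ ⟨y, hy, rfl⟩
    have := (convex_Ico a r).image_sub_le_mul_sub_of_hasDerivAt_le hd
      (fun z hz => (le_abs_self _).trans (hψ z hz)) (left_mem_Ico.2 har) (Ioo_subset_Ico_self hy)
      hy.1.le
    nlinarith [hy.1, hy.2]
  have hlim := (hmono.mono Ioo_subset_Ico_self).tendsto_nhdsWithin_Ioo_left
    (nonempty_Ioo.2 har) hbdd
  exact ⟨_, (hlim.sub ((tendsto_id.const_mul C).mono_left nhdsWithin_le_nhds)).congr
    fun y => by simp⟩

theorem exists_tendsto_nhdsLT_of_hasDerivAt_of_tendsto {L' : ℝ} (har : a < r)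
    (hd : ∀ y ∈ Ico a r, HasDerivAt φ (ψ y) y) (hψc : ContinuousOn ψ (Ico a r))
    (hψ : Tendsto ψ (𝓝[<] r) (𝓝 L')) : ∃ L, Tendsto φ (𝓝[<] r) (𝓝 L) :=
  let ⟨_, hC⟩ := hψc.exists_abs_le_of_tendsto_nhdsLT hψ
  exists_tendsto_nhdsLT_of_hasDerivAt_of_abs_le har hd hC

theorem exists_tendsto_nhdsLT_of_hasDerivAt_of_antitoneOn (har : a < r)
    (hd : ∀ y ∈ Ico a r, HasDerivAt φ (ψ y) y) (hψ : AntitoneOn ψ (Ico a r))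
    (hφ : ∀ y ∈ Ico a r, 0 ≤ φ y) : ∃ L, Tendsto φ (𝓝[<] r) (𝓝 L) := by
  by_cases hneg : ∃ b ∈ Ico a r, ψ b < 0
  · obtain ⟨b, hb, hψb⟩ := hneg
    have hsub : Ico b r ⊆ Ico a r := Ico_subset_Ico_left hb.1
    have hanti : AntitoneOn φ (Ico b r) :=
      (convex_Ico b r).antitoneOn_of_hasDerivAt_nonpos (fun y hy => hd y (hsub hy))
        (fun y hy => (hψ hb (hsub hy) hy.1).trans hψb.le)
    refine ⟨_, (hanti.mono Ioo_subset_Ico_self).tendsto_nhdsWithin_Ioo_left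
      (nonempty_Ioo.2 hb.2) ⟨0, ?_⟩⟩
    rintro _ ⟨y, hy, rfl⟩
    exact hφ y (hsub (Ioo_subset_Ico_self hy))
  · push Not at hneg
    have hmono : MonotoneOn φ (Ico a r) :=
      (convex_Ico a r).monotoneOn_of_hasDerivAt_nonneg hd hneg
    refine ⟨_, (hmono.mono Ioo_subset_Ico_self).tendsto_nhdsWithin_Ioo_left
      (nonempty_Ioo.2 har) ⟨φ a + ψ a * (r - a), ?_⟩⟩
    rintro _ ⟨y, hy, rfl⟩
    have := (convex_Ico a r).image_sub_le_mul_sub_of_hasDerivAt_le hd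
      (fun z hz => hψ (left_mem_Ico.2 har) hz hz.1) (left_mem_Ico.2 har)
      (Ioo_subset_Ico_self hy) hy.1.le
    nlinarith [hneg a (left_mem_Ico.2 har), hy.2]

theorem tendsto_atBot_of_hasDerivAt_le_neg {c : ℝ} (hc : 0 < c)
    (hd : ∀ y ∈ Ici a, HasDerivAt φ (ψ y) y) (hψ : ∀ y ∈ Ici a, ψ y ≤ -c) :
    Tendsto φ atTop atBot := by
  have hlin : Tendsto (fun y => φ a + -c * (y - a)) atTop atBot :=
    tendsto_atBot_add_const_left _ _
      ((tendsto_atTop_add_const_right _ _ tendsto_id).const_mul_atTop_of_neg (by linarith))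
  refine tendsto_atBot_mono' _ ?_ hlin
  filter_upwards [eventually_ge_atTop a] with y hy
  have := (convex_Ici a).image_sub_le_mul_sub_of_hasDerivAt_le hd hψ self_mem_Ici hy hy
  linarith

end EndpointLimits

section Glue

variable {a r ε : ℝ} {φ ψ σ τ : ℝ → ℝ}

theorem ite_eventuallyEq_left {y : ℝ} (hy : y < r) :
    (fun z => if z < r then φ z else σ z) =ᶠ[𝓝 y] φ := by
  filter_upwards [Iio_mem_nhds hy] with z hz
  simp [show z < r from hz]

theorem ite_eventuallyEq_right {y : ℝ} (hy : r < y) :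
    (fun z => if z < r then φ z else σ z) =ᶠ[𝓝 y] σ := by
  filter_upwards [Ioi_mem_nhds hy] with z hz
  simp [(mem_Ioi.1 hz).not_gt]

theorem Ico_mem_nhdsWithin_Ico_of_lt {b y : ℝ} (hy : y < r) : Ico a r ∈ 𝓝[Ico a b] y :=
  mem_nhdsWithin.2 ⟨Iio r, isOpen_Iio, hy, fun _ hz => ⟨hz.2.1, hz.1⟩⟩

theorem continuousOn_ite_of_tendsto (hφ : ContinuousOn φ (Ico a r))
    (hσ : ∀ y ∈ Ico r (r + ε), ContinuousAt σ y) (hφσ : Tendsto φ (𝓝[<] r) (𝓝 (σ r))) :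
    ContinuousOn (fun y => if y < r then φ y else σ y) (Ico a (r + ε)) := by
  intro y hy
  rcases lt_trichotomy y r with hyr | rfl | hyr
  · exact ((hφ y ⟨hy.1, hyr⟩).mono_of_mem_nhdsWithin (Ico_mem_nhdsWithin_Ico_of_lt hyr)
      ).congr_of_eventuallyEq (nhdsWithin_le_nhds (ite_eventuallyEq_left hyr)) (by simp [hyr])
  · have hleft : ContinuousWithinAt (fun z => if z < y then φ z else σ z) (Iio y) y := by
      rw [ContinuousWithinAt, if_neg (lt_irrefl y)]
      exact hφσ.congr' (eventually_nhdsWithin_of_forall fun z hz => by simp [mem_Iio.1 hz])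
    have hright : ContinuousWithinAt (fun z => if z < y then φ z else σ z) (Ici y) y :=
      (hσ y ⟨le_rfl, hy.2⟩).continuousWithinAt.congr
        (fun z hz => by simp [not_lt.2 (mem_Ici.1 hz)]) (by simp)
    exact (hleft.union hright).mono fun z _ => (lt_or_ge z y).imp id id
  · exact ((hσ y ⟨hyr.le, hy.2⟩).congr (ite_eventuallyEq_right hyr).symm).continuousWithinAt

theorem hasDerivWithinAt_ite_of_tendsto (har : a < r)
    (hφ : ∀ y ∈ Ico a r, HasDerivWithinAt φ (ψ y) (Ico a r) y)
    (hσ : ∀ y ∈ Ico r (r + ε), HasDerivAt σ (τ y) y)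
    (hφσ : Tendsto φ (𝓝[<] r) (𝓝 (σ r))) (hψτ : Tendsto ψ (𝓝[<] r) (𝓝 (τ r))) :
    ∀ y ∈ Ico a (r + ε), HasDerivWithinAt (fun y => if y < r then φ y else σ y)
      (if y < r then ψ y else τ y) (Ico a (r + ε)) y := by
  intro y hy
  rcases lt_trichotomy y r with hyr | rfl | hyr
  · rw [if_pos hyr]
    exact ((hφ y ⟨hy.1, hyr⟩).mono_of_mem_nhdsWithin (Ico_mem_nhdsWithin_Ico_of_lt hyr)
      ).congr_of_eventuallyEq (nhdsWithin_le_nhds (ite_eventuallyEq_left hyr)) (by simp [hyr])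
  · rw [if_neg (lt_irrefl y)]
    have hG : ∀ x ∈ Ioo a y, HasDerivAt (fun z => if z < y then φ z else σ z) (ψ x) x :=
      fun x hx => ((hφ x ⟨hx.1.le, hx.2⟩).hasDerivAt (Ico_mem_nhds hx.1 hx.2)
        ).congr_of_eventuallyEq (ite_eventuallyEq_left hx.2)
    have hleft : HasDerivWithinAt (fun z => if z < y then φ z else σ z) (τ y) (Iic y) y := by
      refine hasDerivWithinAt_Iic_of_tendsto_deriv
        (fun x hx => (hG x hx).differentiableAt.differentiableWithinAt) ?_ (Ioo_mem_nhdsLT har)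
        (hψτ.congr' ?_)
      · rw [ContinuousWithinAt, if_neg (lt_irrefl y)]
        exact (hφσ.mono_left (nhdsWithin_mono _ Ioo_subset_Iio_self)).congr'
          (eventually_nhdsWithin_of_forall fun z hz => by simp [hz.2])
      · filter_upwards [Ioo_mem_nhdsLT har] with x hx
        exact (hG x hx).deriv.symm
    have hright : HasDerivWithinAt (fun z => if z < y then φ z else σ z) (τ y) (Ici y) y :=
      (hσ y ⟨le_rfl, hy.2⟩).hasDerivWithinAt.congr
        (fun z hz => by simp [not_lt.2 (mem_Ici.1 hz)]) (by simp)
    exact (hleft.union hright).mono fun z _ => (le_total z y).imp id id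
  · rw [if_neg hyr.not_gt]
    exact ((hσ y ⟨hyr.le, hy.2⟩).congr_of_eventuallyEq
      (ite_eventuallyEq_right hyr)).hasDerivWithinAt

end Glue

theorem exists_hasDerivAt_of_contDiffAt_uncurry {E : Type*} [NormedAddCommGroup E]
    [NormedSpace ℝ E] [CompleteSpace E] {v : ℝ → E → E} {t₀ : ℝ} {x₀ : E}
    (hv : ContDiffAt ℝ 1 (fun p : ℝ × E => v p.1 p.2) (t₀, x₀)) :
    ∃ γ : ℝ → E, γ t₀ = x₀ ∧
      ∃ ε > 0, ∀ t ∈ Ioo (t₀ - ε) (t₀ + ε), HasDerivAt γ (v t (γ t)) t := by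
  -- make the equation autonomous by adjoining time as a coordinate with `ṫ = 1`
  obtain ⟨β, hβ₀, ε, hε, hβ⟩ := (contDiffAt_const (c := (1 : ℝ)).prodMk hv
    ).exists_forall_mem_closedBall_exists_eq_forall_mem_Ioo_hasDerivAt₀ t₀
  have hfst : ∀ t ∈ Ioo (t₀ - ε) (t₀ + ε), HasDerivAt (fun t => (β t).1) 1 t := fun t ht =>
    (ContinuousLinearMap.fst ℝ ℝ E).hasFDerivAt.comp_hasDerivAt t (hβ t ht)
  have htime : EqOn (fun t => (β t).1) id (Ioo (t₀ - ε) (t₀ + ε)) :=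
    isOpen_Ioo.eqOn_of_deriv_eq isPreconnected_Ioo
      (fun t ht => (hfst t ht).differentiableAt.differentiableWithinAt)
      differentiableOn_id (fun t ht => by simp [(hfst t ht).deriv])
      (show t₀ ∈ Ioo (t₀ - ε) (t₀ + ε) by constructor <;> linarith) (by simp [hβ₀])
  refine ⟨fun t => (β t).2, by simp [hβ₀], ε, hε, fun t ht => ?_⟩
  have hsnd := (ContinuousLinearMap.snd ℝ ℝ E).hasFDerivAt.comp_hasDerivAt t (hβ t ht)
  have htime_t : (β t).1 = t := htime ht
  simp only [ContinuousLinearMap.coe_snd', htime_t] at hsnd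
  exact hsnd

structure ProfileSolAt (m α : ℝ) (f f1 f2 f3 f4 : ℝ → ℝ) (y : ℝ) : Prop where
  hasDerivAt_f : HasDerivAt f (f1 y) y
  hasDerivAt_f1 : HasDerivAt f1 (f2 y) y
  hasDerivAt_f2 : HasDerivAt f2 (f3 y) y
  hasDerivAt_f3 : HasDerivAt f3 (f4 y) y
  pos : 0 < f y
  ode : α * (f y - y * f1 y) + m * f y ^ (m - 1) * f1 y * f3 y + f y ^ m * f4 y = 0

def SigmaMinus (f f1 f2 f3 : ℝ → ℝ) (y : ℝ) : Prop :=
  y * f1 y < f y ∧ f2 y < 0 ∧ f3 y < 0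

def profileF4 (m α y u u1 u3 : ℝ) : ℝ :=
  -(α * (u - y * u1) + m * u ^ (m - 1) * u1 * u3) / u ^ m

theorem C4On.profileSolAt {m α y : ℝ} {s : Set ℝ} {f f1 f2 f3 f4 : ℝ → ℝ}
    (hC4 : C4On s f f1 f2 f3 f4) (hs : s ∈ 𝓝 y) (hpos : 0 < f y)
    (hode : α * (f y - y * f1 y) + m * f y ^ (m - 1) * f1 y * f3 y + f y ^ m * f4 y = 0) :
    ProfileSolAt m α f f1 f2 f3 f4 y :=
  have hy := mem_of_mem_nhds hs
  ⟨(hC4.1 y hy).hasDerivAt hs, (hC4.2.1 y hy).hasDerivAt hs, (hC4.2.2.1 y hy).hasDerivAt hs,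
    (hC4.2.2.2.1 y hy).hasDerivAt hs, hpos, hode⟩

theorem profileF4_spec {m α y u u1 u3 : ℝ} (hu : 0 < u) :
    α * (u - y * u1) + m * u ^ (m - 1) * u1 * u3 + u ^ m * profileF4 m α y u u1 u3 = 0 := by
  rw [profileF4, mul_div_cancel₀ _ (Real.rpow_pos_of_pos hu m).ne']
  ring

theorem eq_profileF4 {m α y u u1 u3 u4 : ℝ} (hu : 0 < u)
    (h : α * (u - y * u1) + m * u ^ (m - 1) * u1 * u3 + u ^ m * u4 = 0) :
    u4 = profileF4 m α y u u1 u3 := by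
  rw [profileF4, eq_div_iff (Real.rpow_pos_of_pos hu m).ne']
  linear_combination h

theorem continuousAt_profileF4 {m α : ℝ} {p : ℝ × ℝ × ℝ × ℝ} (hp : 0 < p.2.1) :
    ContinuousAt (fun q : ℝ × ℝ × ℝ × ℝ => profileF4 m α q.1 q.2.1 q.2.2.1 q.2.2.2) p := by
  have hpow : ∀ s : ℝ, ContinuousAt (fun q : ℝ × ℝ × ℝ × ℝ => q.2.1 ^ s) p :=
    fun s => continuousAt_snd.fst.rpow_const (Or.inl hp.ne')
  exact ((continuousAt_const.mul (continuousAt_snd.fst.sub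
    (continuousAt_fst.mul continuousAt_snd.snd.fst))).add (((continuousAt_const.mul
    (hpow (m - 1))).mul continuousAt_snd.snd.fst).mul continuousAt_snd.snd.snd)).neg.div
    (hpow m) (Real.rpow_pos_of_pos hp m).ne'

theorem exists_profileSolAt_Ico (m α r ℓ L1 L2 L3 : ℝ) (hℓ : 0 < ℓ) :
    ∃ ε > 0, ∃ σ σ1 σ2 σ3 : ℝ → ℝ, σ r = ℓ ∧ σ1 r = L1 ∧ σ2 r = L2 ∧ σ3 r = L3 ∧
      ∀ y ∈ Ico r (r + ε),
        ProfileSolAt m α σ σ1 σ2 σ3 (fun y => profileF4 m α y (σ y) (σ1 y) (σ3 y)) y := by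
  set v : ℝ → (Fin 4 → ℝ) → Fin 4 → ℝ :=
    fun t u => ![u 1, u 2, u 3, profileF4 m α t (u 0) (u 1) (u 3)]
  set x₀ : Fin 4 → ℝ := ![ℓ, L1, L2, L3]
  have hv : ContDiffAt ℝ 1 (fun p : ℝ × (Fin 4 → ℝ) => v p.1 p.2) (r, x₀) := by
    have hcoord : ∀ i, ContDiffAt ℝ 1 (fun p : ℝ × (Fin 4 → ℝ) => p.2 i) (r, x₀) :=
      fun i => by fun_prop
    have hpow : ∀ s : ℝ, ContDiffAt ℝ 1 (fun p : ℝ × (Fin 4 → ℝ) => p.2 0 ^ s) (r, x₀) :=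
      fun s => (hcoord 0).rpow_const_of_ne (by simpa [x₀] using hℓ.ne')
    rw [contDiffAt_pi]
    intro i
    fin_cases i
    · exact hcoord 1
    · exact hcoord 2
    · exact hcoord 3
    · exact ((((contDiffAt_const.mul ((hcoord 0).sub (contDiffAt_fst.mul (hcoord 1)))).add
        (((contDiffAt_const.mul (hpow (m - 1))).mul (hcoord 1)).mul (hcoord 3))).neg).div
        (hpow m) (by simpa [x₀] using (Real.rpow_pos_of_pos hℓ m).ne'))
  obtain ⟨γ, hγ₀, ε, hε, hγ⟩ := exists_hasDerivAt_of_contDiffAt_uncurry hv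
  have hγi : ∀ i, ∀ t ∈ Ioo (r - ε) (r + ε), HasDerivAt (fun t => γ t i) (v t (γ t) i) t :=
    fun i t ht => hasDerivAt_pi.1 (hγ t ht) i
  have hr : r ∈ Ioo (r - ε) (r + ε) := ⟨by linarith, by linarith⟩
  have hev : ∀ᶠ t in 𝓝 r, 0 < γ t 0 ∧ t ∈ Ioo (r - ε) (r + ε) :=
    (continuousAt_const.eventually_lt (hγi 0 r hr).continuousAt (by simpa [hγ₀, x₀] using hℓ)).and
      (isOpen_Ioo.mem_nhds hr)
  obtain ⟨l, u, ⟨hl, hu⟩, hsub⟩ := mem_nhds_iff_exists_Ioo_subset.1 hev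
  refine ⟨u - r, by linarith, fun t => γ t 0, fun t => γ t 1, fun t => γ t 2, fun t => γ t 3,
    by simp [hγ₀, x₀], by simp [hγ₀, x₀], by simp [hγ₀, x₀], by simp [hγ₀, x₀], fun t ht => ?_⟩
  obtain ⟨hpos, htε⟩ := hsub ⟨hl.trans_le ht.1, by linarith [ht.2]⟩
  exact ⟨hγi 0 t htε, hγi 1 t htε, hγi 2 t htε, hγi 3 t htε, hpos, profileF4_spec hpos⟩

section Profile

variable {m α : ℝ} {f f1 f2 f3 f4 : ℝ → ℝ}

theorem f3_neg_of_sigmaMinus (hα : 0 < α) {y₀ b : ℝ} (hy₀ : 0 < y₀)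
    (hsol : ∀ y ∈ Icc y₀ b, ProfileSolAt m α f f1 f2 f3 f4 y) (hS : SigmaMinus f f1 f2 f3 y₀) :
    ∀ y ∈ Icc y₀ b, f3 y < 0 := by
  obtain ⟨hS1, hS2, hS3⟩ := hS
  refine ContinuousOn.forall_neg_of_not_first_zero
    (fun y hy => (hsol y hy).hasDerivAt_f3.continuousAt.continuousWithinAt) hS3 ?_
  intro c hc hc0 hbefore
  have hsol' : ∀ y ∈ Icc y₀ c, ProfileSolAt m α f f1 f2 f3 f4 y :=
    fun y hy => hsol y (Icc_subset_Icc_right hc.2 hy)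
  have hf3 : ∀ y ∈ Icc y₀ c, f3 y ≤ 0 := fun y hy =>
    hy.2.lt_or_eq.elim (fun h => (hbefore y ⟨hy.1, h⟩).le) (fun h => (h ▸ hc0).le)
  have hf2 : ∀ y ∈ Icc y₀ c, f2 y < 0 := fun y hy =>
    ((convex_Icc y₀ c).antitoneOn_of_hasDerivAt_nonpos (fun z hz => (hsol' z hz).hasDerivAt_f2)
      hf3 (left_mem_Icc.2 hc.1.le) hy hy.1).trans_lt hS2
  -- `f - y f'` has derivative `-y f'' > 0`, so it stays positive up to `c`
  have hmono : MonotoneOn (fun y => f y - y * f1 y) (Icc y₀ c) :=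
    (convex_Icc y₀ c).monotoneOn_of_hasDerivAt_nonneg (ψ := fun y => -(y * f2 y))
      (fun y hy => ((hsol' y hy).hasDerivAt_f.sub ((hasDerivAt_id y).mul
        (hsol' y hy).hasDerivAt_f1)).congr_deriv (by simp))
      (fun y hy => neg_nonneg.2 (mul_nonpos_of_nonneg_of_nonpos (hy₀.le.trans hy.1) (hf2 y hy).le))
  have hh : 0 < f c - c * f1 c :=
    (sub_pos.2 hS1).trans_le (hmono (left_mem_Icc.2 hc.1.le) (right_mem_Icc.2 hc.1.le) hc.1.le)
  have hf4 : f4 c < 0 := by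
    have hode := (hsol' c (right_mem_Icc.2 hc.1.le)).ode
    have hfm := Real.rpow_pos_of_pos (hsol' c (right_mem_Icc.2 hc.1.le)).pos m
    rw [hc0, mul_zero, add_zero] at hode
    nlinarith
  exact hf4.not_ge <| (hsol' c (right_mem_Icc.2 hc.1.le)).hasDerivAt_f3.nonneg_of_nonpos_left
    hc.1 hc0 fun y hy => hf3 y (Ioo_subset_Icc_self hy)

theorem f2_le_of_sigmaMinus (hα : 0 < α) {y₀ y : ℝ} (hy₀ : 0 < y₀) (hy : y₀ ≤ y)
    (hsol : ∀ z ∈ Icc y₀ y, ProfileSolAt m α f f1 f2 f3 f4 z) (hS : SigmaMinus f f1 f2 f3 y₀) :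
    f2 y ≤ f2 y₀ :=
  (convex_Icc y₀ y).antitoneOn_of_hasDerivAt_nonpos (fun z hz => (hsol z hz).hasDerivAt_f2)
    (fun z hz => (f3_neg_of_sigmaMinus hα hy₀ hsol hS z hz).le) (left_mem_Icc.2 hy)
    (right_mem_Icc.2 hy) hy

theorem false_of_sigmaMinus_of_forall_Ici (hα : 0 < α) {y₀ : ℝ} (hy₀ : 0 < y₀)
    (hsol : ∀ y ∈ Ici y₀, ProfileSolAt m α f f1 f2 f3 f4 y) (hS : SigmaMinus f f1 f2 f3 y₀) :
    False := by
  have hf1 : Tendsto f1 atTop atBot :=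
    tendsto_atBot_of_hasDerivAt_le_neg (neg_pos.2 hS.2.1) (fun y hy => (hsol y hy).hasDerivAt_f1)
      fun y hy => (neg_neg (f2 y₀)).symm ▸
        f2_le_of_sigmaMinus hα hy₀ hy (fun z hz => hsol z hz.1) hS
  obtain ⟨b, hb⟩ := eventually_atTop.1 (hf1.eventually (eventually_le_atBot (-1)))
  have hf : Tendsto f atTop atBot :=
    tendsto_atBot_of_hasDerivAt_le_neg one_pos (a := max b y₀)
      (fun y hy => (hsol y (le_of_max_le_right (mem_Ici.1 hy))).hasDerivAt_f)
      fun y hy => hb y (le_of_max_le_left (mem_Ici.1 hy))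
  obtain ⟨y, hfy, hy⟩ :=
    ((hf.eventually (eventually_le_atBot 0)).and (eventually_ge_atTop y₀)).exists
  exact (hsol y hy).pos.not_ge hfy

theorem exists_tendsto_of_sigmaMinus (hα : 0 < α) {y₀ r : ℝ} (hy₀ : 0 < y₀) (hy₀r : y₀ < r)
    (hsol : ∀ y ∈ Ico y₀ r, ProfileSolAt m α f f1 f2 f3 f4 y) (hS : SigmaMinus f f1 f2 f3 y₀) :
    ∃ ℓ, Tendsto f (𝓝[<] r) (𝓝 ℓ) := by
  have hf2 : ∀ y ∈ Ico y₀ r, f2 y ≤ 0 := fun y hy =>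
    (f2_le_of_sigmaMinus hα hy₀ hy.1 (fun z hz => hsol z ⟨hz.1, hz.2.trans_lt hy.2⟩) hS).trans
      hS.2.1.le
  exact exists_tendsto_nhdsLT_of_hasDerivAt_of_antitoneOn hy₀r
    (fun y hy => (hsol y hy).hasDerivAt_f)
    ((convex_Ico y₀ r).antitoneOn_of_hasDerivAt_nonpos (fun y hy => (hsol y hy).hasDerivAt_f1) hf2)
    (fun y hy => (hsol y hy).pos.le)

theorem ProfileSolAt.hasDerivAt_flux {y : ℝ} (h : ProfileSolAt m α f f1 f2 f3 f4 y) :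
    HasDerivAt (fun y => f y ^ m * f3 y - α * (y * f y)) (-(2 * α * f y)) y := by
  refine (((h.hasDerivAt_f.rpow_const (p := m) (Or.inl h.pos.ne')).mul h.hasDerivAt_f3).sub
    (((hasDerivAt_id' y).mul h.hasDerivAt_f).const_mul α)).congr_deriv ?_
  linear_combination h.ode

theorem exists_tendsto_derivs_of_tendsto_pos {a r ℓ : ℝ} (har : a < r)
    (hsol : ∀ y ∈ Ico a r, ProfileSolAt m α f f1 f2 f3 f4 y) (hℓ : 0 < ℓ)
    (hf : Tendsto f (𝓝[<] r) (𝓝 ℓ)) :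
    ∃ L1 L2 L3, Tendsto f1 (𝓝[<] r) (𝓝 L1) ∧ Tendsto f2 (𝓝[<] r) (𝓝 L2) ∧
      Tendsto f3 (𝓝[<] r) (𝓝 L3) := by
  have hcont : ∀ {φ ψ : ℝ → ℝ}, (∀ y ∈ Ico a r, HasDerivAt φ (ψ y) y) → ContinuousOn φ (Ico a r) :=
    fun hd y hy => (hd y hy).continuousAt.continuousWithinAt
  have hid : Tendsto (fun y : ℝ => y) (𝓝[<] r) (𝓝 r) :=
    tendsto_nhdsWithin_of_tendsto_nhds tendsto_id
  obtain ⟨Φ, hΦ⟩ := exists_tendsto_nhdsLT_of_hasDerivAt_of_tendsto har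
    (fun y hy => (hsol y hy).hasDerivAt_flux)
    (continuousOn_const.mul (hcont fun y hy => (hsol y hy).hasDerivAt_f)).neg
    ((hf.const_mul (2 * α)).neg)
  have hf3 : Tendsto f3 (𝓝[<] r) (𝓝 ((Φ + α * (r * ℓ)) / ℓ ^ m)) := by
    refine ((hΦ.add ((hid.mul hf).const_mul α)).div (hf.rpow_const (Or.inl hℓ.ne'))
      (Real.rpow_pos_of_pos hℓ m).ne').congr' ?_
    filter_upwards [Ioo_mem_nhdsLT har] with y hy
    have := (Real.rpow_pos_of_pos (hsol y (Ioo_subset_Ico_self hy)).pos m).ne'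
    simp only [Pi.div_apply, sub_add_cancel, mul_div_cancel_left₀ _ this]
  obtain ⟨L2, hf2⟩ := exists_tendsto_nhdsLT_of_hasDerivAt_of_tendsto har
    (fun y hy => (hsol y hy).hasDerivAt_f2) (hcont fun y hy => (hsol y hy).hasDerivAt_f3) hf3
  obtain ⟨L1, hf1⟩ := exists_tendsto_nhdsLT_of_hasDerivAt_of_tendsto har
    (fun y hy => (hsol y hy).hasDerivAt_f1) (hcont fun y hy => (hsol y hy).hasDerivAt_f2) hf2
  exact ⟨L1, L2, _, hf1, hf2, hf3⟩

theorem exists_profile_extension {a r ℓ L1 L2 L3 : ℝ} (har : a < r)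
    (hC4 : C4On (Ico a r) f f1 f2 f3 f4) (hpos : ∀ y ∈ Ico a r, 0 < f y)
    (hODE : ProfileODE m α (Ioo a r) f f1 f3 f4) (hℓ : 0 < ℓ)
    (h0 : Tendsto f (𝓝[<] r) (𝓝 ℓ)) (h1 : Tendsto f1 (𝓝[<] r) (𝓝 L1))
    (h2 : Tendsto f2 (𝓝[<] r) (𝓝 L2)) (h3 : Tendsto f3 (𝓝[<] r) (𝓝 L3)) :
    ∃ ε > 0, ∃ g g1 g2 g3 g4 : ℝ → ℝ, C4On (Ico a (r + ε)) g g1 g2 g3 g4 ∧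
      (∀ y ∈ Ico a (r + ε), 0 < g y) ∧ ProfileODE m α (Ioo a (r + ε)) g g1 g3 g4 ∧
      EqOn g f (Ico a r) := by
  obtain ⟨ε, hε, σ, σ1, σ2, σ3, hσ0, hσ1, hσ2, hσ3, hσ⟩ :=
    exists_profileSolAt_Ico m α r ℓ L1 L2 L3 hℓ
  set σ4 := fun y => profileF4 m α y (σ y) (σ1 y) (σ3 y)
  have h4 : Tendsto f4 (𝓝[<] r) (𝓝 (σ4 r)) := by
    simp only [σ4, hσ0, hσ1, hσ3]
    refine ((continuousAt_profileF4 (p := (r, ℓ, L1, L3)) hℓ).tendsto.comp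
      ((tendsto_nhdsWithin_of_tendsto_nhds tendsto_id).prodMk_nhds
        (h0.prodMk_nhds (h1.prodMk_nhds h3)))).congr' ?_
    filter_upwards [Ioo_mem_nhdsLT har] with y hy
    exact (eq_profileF4 (hpos y (Ioo_subset_Ico_self hy)) (hODE y hy)).symm
  have hσ4 : ∀ y ∈ Ico r (r + ε), ContinuousAt σ4 y := fun y hy =>
    (continuousAt_profileF4 (p := (y, σ y, σ1 y, σ3 y)) (hσ y hy).pos).comp
      (f := fun x => (x, σ x, σ1 x, σ3 x))
      (continuousAt_id.prodMk ((hσ y hy).hasDerivAt_f.continuousAt.prodMk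
        ((hσ y hy).hasDerivAt_f1.continuousAt.prodMk (hσ y hy).hasDerivAt_f3.continuousAt)))
  refine ⟨ε, hε, fun y => if y < r then f y else σ y, fun y => if y < r then f1 y else σ1 y,
    fun y => if y < r then f2 y else σ2 y, fun y => if y < r then f3 y else σ3 y,
    fun y => if y < r then f4 y else σ4 y,
    ⟨hasDerivWithinAt_ite_of_tendsto har hC4.1 (fun y hy => (hσ y hy).hasDerivAt_f)
        (hσ0 ▸ h0) (hσ1 ▸ h1),
      hasDerivWithinAt_ite_of_tendsto har hC4.2.1 (fun y hy => (hσ y hy).hasDerivAt_f1)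
        (hσ1 ▸ h1) (hσ2 ▸ h2),
      hasDerivWithinAt_ite_of_tendsto har hC4.2.2.1 (fun y hy => (hσ y hy).hasDerivAt_f2)
        (hσ2 ▸ h2) (hσ3 ▸ h3),
      hasDerivWithinAt_ite_of_tendsto har hC4.2.2.2.1 (fun y hy => (hσ y hy).hasDerivAt_f3)
        (hσ3 ▸ h3) h4,
      continuousOn_ite_of_tendsto hC4.2.2.2.2 hσ4 h4⟩, fun y hy => ?_, fun y hy => ?_,
    fun y hy => if_pos hy.2⟩
  · by_cases hyr : y < r
    · simpa [hyr] using hpos y ⟨hy.1, hyr⟩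
    · simpa [hyr] using (hσ y ⟨not_lt.1 hyr, hy.2⟩).pos
  · by_cases hyr : y < r
    · simpa [hyr] using hODE y ⟨hy.1, hyr⟩
    · simpa [hyr] using (hσ y ⟨not_lt.1 hyr, hy.2⟩).ode

theorem tendsto_zero_of_sigmaMinus_of_not_extendable (hα : 0 < α) {a r y₀ : ℝ} (hay₀ : a < y₀)
    (hy₀ : 0 < y₀) (hy₀r : y₀ < r) (hC4 : C4On (Ico a r) f f1 f2 f3 f4)
    (hpos : ∀ y ∈ Ico a r, 0 < f y) (hODE : ProfileODE m α (Ioo a r) f f1 f3 f4)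
    (hS : SigmaMinus f f1 f2 f3 y₀)
    (hmax : ¬ ∃ ε > 0, ∃ g g1 g2 g3 g4 : ℝ → ℝ, C4On (Ico a (r + ε)) g g1 g2 g3 g4 ∧
      (∀ y ∈ Ico a (r + ε), 0 < g y) ∧ ProfileODE m α (Ioo a (r + ε)) g g1 g3 g4 ∧
      EqOn g f (Ico a r)) :
    Tendsto f (𝓝[<] r) (𝓝 0) := by
  have hsol : ∀ y ∈ Ico y₀ r, ProfileSolAt m α f f1 f2 f3 f4 y := fun y hy =>
    have hay : a < y := hay₀.trans_le hy.1
    hC4.profileSolAt (Ico_mem_nhds hay hy.2) (hpos y ⟨hay.le, hy.2⟩) (hODE y ⟨hay, hy.2⟩)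
  obtain ⟨ℓ, hℓ⟩ := exists_tendsto_of_sigmaMinus hα hy₀ hy₀r hsol hS
  have hℓ0 : 0 ≤ ℓ := ge_of_tendsto hℓ <| by
    filter_upwards [Ioo_mem_nhdsLT hy₀r] with y hy using (hsol y (Ioo_subset_Ico_self hy)).pos.le
  obtain rfl | hℓpos := hℓ0.eq_or_lt
  · exact hℓ
  obtain ⟨L1, L2, L3, h1, h2, h3⟩ := exists_tendsto_derivs_of_tendsto_pos hy₀r hsol hℓpos hℓ
  exact (hmax (exists_profile_extension (hay₀.trans hy₀r) hC4 hpos hODE hℓpos hℓ h1 h2 h3)).elim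

end Profile

theorem setOf_nonneg_coe_lt (r : ℝ) : {y : ℝ | 0 ≤ y ∧ (y : EReal) < r} = Ico 0 r := by
  ext; simp

theorem setOf_pos_coe_lt (r : ℝ) : {y : ℝ | 0 < y ∧ (y : EReal) < r} = Ioo 0 r := by
  ext; simp

theorem stmt5_general (m α : ℝ) (hα : 0 < α)
    (yM : EReal)
    (f f1 f2 f3 f4 : ℝ → ℝ)
    (hC4 : C4On {y : ℝ | 0 ≤ y ∧ (y : EReal) < yM} f f1 f2 f3 f4)
    (hpos : ∀ y : ℝ, 0 ≤ y → (y : EReal) < yM → 0 < f y)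
    (hODE : ProfileODE m α {y : ℝ | 0 < y ∧ (y : EReal) < yM} f f1 f3 f4)
    -- `f` admits no extension to a positive C⁴ solution on a strictly larger interval
    (hmax : ¬ ∃ (yM' : EReal) (g g1 g2 g3 g4 : ℝ → ℝ), yM < yM' ∧
      C4On {y : ℝ | 0 ≤ y ∧ (y : EReal) < yM'} g g1 g2 g3 g4 ∧
      (∀ y : ℝ, 0 ≤ y → (y : EReal) < yM' → 0 < g y) ∧
      ProfileODE m α {y : ℝ | 0 < y ∧ (y : EReal) < yM'} g g1 g3 g4 ∧
      (∀ y : ℝ, 0 ≤ y → (y : EReal) < yM → g y = f y))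
    (y₀ : ℝ) (hy₀ : 0 < y₀) (hy₀M : (y₀ : EReal) < yM)
    (hSigmaMinus : y₀ * f1 y₀ < f y₀ ∧ f2 y₀ < 0 ∧ f3 y₀ < 0) :
    ∃ yMr : ℝ, yM = (yMr : EReal) ∧ Tendsto f (𝓝[<] yMr) (𝓝 0) := by
  induction yM using EReal.rec with
  | bot => exact absurd hy₀M not_lt_bot
  | top =>
    refine (false_of_sigmaMinus_of_forall_Ici (m := m) (f4 := f4) hα hy₀ (fun y hy => ?_)
      hSigmaMinus).elim
    have hy0 : 0 < y := hy₀.trans_le hy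
    exact hC4.profileSolAt (mem_of_superset (Ioi_mem_nhds hy0) fun w hw =>
      ⟨le_of_lt hw, EReal.coe_lt_top w⟩) (hpos y hy0.le (EReal.coe_lt_top y))
      (hODE y ⟨hy0, EReal.coe_lt_top y⟩)
  | coe r =>
    refine ⟨r, rfl, tendsto_zero_of_sigmaMinus_of_not_extendable hα hy₀ hy₀
      (EReal.coe_lt_coe_iff.1 hy₀M) (by rwa [setOf_nonneg_coe_lt] at hC4)
      (fun y hy => hpos y hy.1 (EReal.coe_lt_coe_iff.2 hy.2)) (by rwa [setOf_pos_coe_lt] at hODE)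
      hSigmaMinus ?_⟩
    rintro ⟨ε, hε, g, g1, g2, g3, g4, hgC4, hgpos, hgODE, hgf⟩
    exact hmax ⟨(r + ε : ℝ), g, g1, g2, g3, g4, EReal.coe_lt_coe_iff.2 (by linarith),
      by rwa [setOf_nonneg_coe_lt], fun y hy hyM => hgpos y ⟨hy, EReal.coe_lt_coe_iff.1 hyM⟩,
      by rwa [setOf_pos_coe_lt], fun y hy hyM => hgf ⟨hy, EReal.coe_lt_coe_iff.1 hyM⟩⟩

theorem stmt5 (m α : ℝ) (hm0 : 0 < m) (hm4 : m ≤ 4) (hα : 0 < α)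
    (yM : EReal) (hyM : 0 < yM)
    (f f1 f2 f3 f4 : ℝ → ℝ)
    (hC4 : C4On {y : ℝ | 0 ≤ y ∧ (y : EReal) < yM} f f1 f2 f3 f4)
    (hpos : ∀ y : ℝ, 0 ≤ y → (y : EReal) < yM → 0 < f y)
    (hODE : ProfileODE m α {y : ℝ | 0 < y ∧ (y : EReal) < yM} f f1 f3 f4)
    -- `f` admits no extension to a positive C⁴ solution on a strictly larger interval
    (hmax : ¬ ∃ (yM' : EReal) (g g1 g2 g3 g4 : ℝ → ℝ), yM < yM' ∧
      C4On {y : ℝ | 0 ≤ y ∧ (y : EReal) < yM'} g g1 g2 g3 g4 ∧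
      (∀ y : ℝ, 0 ≤ y → (y : EReal) < yM' → 0 < g y) ∧
      ProfileODE m α {y : ℝ | 0 < y ∧ (y : EReal) < yM'} g g1 g3 g4 ∧
      (∀ y : ℝ, 0 ≤ y → (y : EReal) < yM → g y = f y))
    (y₀ : ℝ) (hy₀ : 0 < y₀) (hy₀M : (y₀ : EReal) < yM)
    (hSigmaMinus : y₀ * f1 y₀ < f y₀ ∧ f2 y₀ < 0 ∧ f3 y₀ < 0) :
    ∃ yMr : ℝ, yM = (yMr : EReal) ∧ Tendsto f (𝓝[<] yMr) (𝓝 0) :=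
  stmt5_general m α hα yM f f1 f2 f3 f4 hC4 hpos hODE hmax y₀ hy₀ hy₀M hSigmaMinus
end
end

section
/- Let m ∈ (0,4], α > 0 and κ < 0. Let f : [0, Y) → ℝ (Y > 0) be a four-times continuously differentiable function with f > 0, satisfying the self-similar profile equation α·(f − y f') + m f^{m−1} f' f''' + f^m f'''' = 0 on (0, Y) and the initial conditions f(0) = 1, f'(0) = 0, f''(0) = κ, f'''(0) = 0. Then there exists y₀ ∈ (0, Y) at which the Σ₋ condition holds: y₀·f'(y₀) < f(y₀), f''(y₀) < 0 and f'''(y₀) < 0. -/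
open Set Filter Topology MeasureTheory

noncomputable section

theorem stmt6 (m α κ : ℝ) (hm0 : 0 < m) (hm4 : m ≤ 4) (hα : 0 < α) (hκ : κ < 0)
    (Y : ℝ) (hY : 0 < Y) (f f1 f2 f3 f4 : ℝ → ℝ)
    (hC4 : C4On (Ico 0 Y) f f1 f2 f3 f4)
    (hpos : ∀ y ∈ Ico (0 : ℝ) Y, 0 < f y)
    (hODE : ProfileODE m α (Ioo 0 Y) f f1 f3 f4)
    (hf0 : f 0 = 1) (hf1 : f1 0 = 0) (hf2 : f2 0 = κ) (hf3 : f3 0 = 0) :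
    ∃ y₀ ∈ Ioo (0 : ℝ) Y, y₀ * f1 y₀ < f y₀ ∧ f2 y₀ < 0 ∧ f3 y₀ < 0 := by
  obtain ⟨hDf, hDf1, hDf2, hDf3, hCf4⟩ := hC4
  have h0mem : (0 : ℝ) ∈ Ico (0 : ℝ) Y := ⟨le_refl 0, hY⟩
  have hcf : ContinuousOn f (Ico 0 Y) := fun y hy => (hDf y hy).continuousWithinAt
  have hcf1 : ContinuousOn f1 (Ico 0 Y) := fun y hy => (hDf1 y hy).continuousWithinAt
  have hcf2 : ContinuousOn f2 (Ico 0 Y) := fun y hy => (hDf2 y hy).continuousWithinAt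
  have hcf3 : ContinuousOn f3 (Ico 0 Y) := fun y hy => (hDf3 y hy).continuousWithinAt
  -- the full ODE expression
  set E : ℝ → ℝ := fun y =>
    α * (f y - y * f1 y) + m * f y ^ (m - 1) * f1 y * f3 y + f y ^ m * f4 y with hE
  have hcE : ContinuousWithinAt E (Ico 0 Y) 0 := by
    have hf0pos : f 0 ≠ 0 := (hpos 0 h0mem).ne'
    have h1 := hcf 0 h0mem
    have h2 := hcf1 0 h0mem
    have h3 := hcf3 0 h0mem
    have h4 := hCf4 0 h0mem
    have hr1 : ContinuousWithinAt (fun y => f y ^ (m - 1)) (Ico 0 Y) 0 :=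
      h1.rpow_const (Or.inl hf0pos)
    have hr2 : ContinuousWithinAt (fun y => f y ^ m) (Ico 0 Y) 0 :=
      h1.rpow_const (Or.inl hf0pos)
    exact ((continuousWithinAt_const.mul (h1.sub
      (continuousWithinAt_id.mul h2))).add
      (((continuousWithinAt_const.mul hr1).mul h2).mul h3)).add (hr2.mul h4)
  have hNeBot : (𝓝[Ioo (0:ℝ) Y] 0).NeBot := by
    apply mem_closure_iff_nhdsWithin_neBot.mp
    rw [closure_Ioo hY.ne]
    exact ⟨le_refl 0, hY.le⟩
  have hE0 : E 0 = 0 := by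
    have t1 : Tendsto E (𝓝[Ioo (0:ℝ) Y] 0) (𝓝 (E 0)) :=
      hcE.mono_left (nhdsWithin_mono 0 Ioo_subset_Ico_self)
    have t2 : Tendsto E (𝓝[Ioo (0:ℝ) Y] 0) (𝓝 0) := by
      apply Tendsto.congr' _ tendsto_const_nhds
      filter_upwards [self_mem_nhdsWithin] with y hy
      exact (hODE y hy).symm
    exact tendsto_nhds_unique t1 t2
  have hf40 : f4 0 = -α := by
    have h := hE0
    simp only [hE, hf0, hf1, hf3, Real.one_rpow] at h
    nlinarith [h]
  -- eventually near 0 the three quantities have the right sign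
  have hev : ∀ᶠ y in 𝓝[Ico (0:ℝ) Y] 0,
      0 < f y - y * f1 y ∧ f2 y < 0 ∧ f4 y < 0 := by
    have e1 : ∀ᶠ y in 𝓝[Ico (0:ℝ) Y] 0, 0 < f y - y * f1 y := by
      have hc : ContinuousWithinAt (fun y => f y - y * f1 y) (Ico 0 Y) 0 :=
        (hcf 0 h0mem).sub (continuousWithinAt_id.mul (hcf1 0 h0mem))
      have hval : (0:ℝ) < f 0 - 0 * f1 0 := by rw [hf0]; norm_num
      exact hc.eventually (eventually_gt_nhds hval)
    have e2 : ∀ᶠ y in 𝓝[Ico (0:ℝ) Y] 0, f2 y < 0 := by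
      have hval : f2 0 < 0 := by rw [hf2]; exact hκ
      exact (hcf2 0 h0mem).eventually (eventually_lt_nhds hval)
    have e3 : ∀ᶠ y in 𝓝[Ico (0:ℝ) Y] 0, f4 y < 0 := by
      have hval : f4 0 < 0 := by rw [hf40]; linarith
      exact (hCf4 0 h0mem).eventually (eventually_lt_nhds hval)
    filter_upwards [e1, e2, e3] with y h1 h2 h3 using ⟨h1, h2, h3⟩
  obtain ⟨ε, hε, hball⟩ := Metric.mem_nhdsWithin_iff.mp hev
  have hP : ∀ x ∈ Ico (0:ℝ) Y, dist x 0 < ε →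
      0 < f x - x * f1 x ∧ f2 x < 0 ∧ f4 x < 0 := by
    intro x hx hd
    exact hball ⟨Metric.mem_ball.mpr hd, hx⟩
  set y₀ : ℝ := min (ε / 2) (Y / 2) with hy₀
  have hy₀pos : 0 < y₀ := lt_min (by linarith) (by linarith)
  have hy₀ε : y₀ < ε := lt_of_le_of_lt (min_le_left _ _) (by linarith)
  have hy₀Y : y₀ < Y := lt_of_le_of_lt (min_le_right _ _) (by linarith)
  have hsub : Icc (0:ℝ) y₀ ⊆ Ico 0 Y := fun x hx => ⟨hx.1, lt_of_le_of_lt hx.2 hy₀Y⟩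
  have hPy : ∀ x ∈ Icc (0:ℝ) y₀,
      0 < f x - x * f1 x ∧ f2 x < 0 ∧ f4 x < 0 := by
    intro x hx
    apply hP x (hsub hx)
    rw [Real.dist_eq, sub_zero, abs_of_nonneg hx.1]
    exact lt_of_le_of_lt hx.2 hy₀ε
  refine ⟨y₀, ⟨hy₀pos, hy₀Y⟩, ?_, (hPy y₀ ⟨hy₀pos.le, le_refl _⟩).2.1, ?_⟩
  · have := (hPy y₀ ⟨hy₀pos.le, le_refl _⟩).1
    linarith
  · -- MVT for f3 on [0, y₀]
    have hcont : ContinuousOn f3 (Icc 0 y₀) := hcf3.mono hsub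
    have hderiv : ∀ x ∈ Ioo (0:ℝ) y₀, HasDerivAt f3 (f4 x) x := by
      intro x hx
      have hxmem : x ∈ Ico (0:ℝ) Y := ⟨hx.1.le, lt_trans hx.2 hy₀Y⟩
      exact (hDf3 x hxmem).hasDerivAt (Ico_mem_nhds hx.1 (lt_trans hx.2 hy₀Y))
    obtain ⟨c, hc, hceq⟩ := exists_hasDerivAt_eq_slope f3 f4 hy₀pos hcont hderiv
    have hc4 : f4 c < 0 := (hPy c ⟨hc.1.le, hc.2.le⟩).2.2
    have : (f3 y₀ - f3 0) / (y₀ - 0) < 0 := hceq ▸ hc4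
    rw [hf3, sub_zero, sub_zero, div_neg_iff] at this
    rcases this with ⟨h, _⟩ | ⟨h, _⟩
    · linarith
    · exact h
end
end

section
/- Let m ∈ (0,4] and α > 0, and let f be a four-times continuously differentiable positive solution of the self-similar profile equation α·(f − y f') + m f^{m−1} f' f''' + f^m f'''' = 0 on an open interval I ⊆ (0,∞). Define E₂(y) := −(α/(2y))·( f(y) − y·f'(y) )² + f(y)^m · f''(y) · f'''(y). Then E₂ is differentiable on I with E₂'(y) = (α/(2y²))·( f(y) − y·f'(y) )² + f(y)^m·f'''(y)² for all y ∈ I. Moreover, if f is a positive four-times continuously differentiable solution on [0, Y) (Y > 0) with initial conditions f(0) = 1, f'(0) = 0, f''(0) = κ, f'''(0) = 0, then E₂(y) → −∞ as y → 0⁺. -/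
open Set Filter Topology MeasureTheory

noncomputable section

/-!
Write `u = f - y f'`, so that `u' = -y f''` and the ODE reads `(f^m f''')' = -α u`.
Differentiating `E₂ = -(α / 2y) u² + f^m f'' f'''` then gives
`α u² / 2y² + α u f''` from the first term and `-α u f'' + f^m f'''²` from the second,
and the cross terms cancel.
At the origin `u → f(0) = 1` while `f^m f'' f''' → 0` because `f'''(0) = 0`,
so `E₂` behaves like `-α / 2y`.
-/

/-- The energy `E₂`. -/
def profileEnergy (m α : ℝ) (f f1 f2 f3 : ℝ → ℝ) (y : ℝ) : ℝ :=
  -(α / (2 * y)) * (f y - y * f1 y) ^ 2 + f y ^ m * f2 y * f3 y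

theorem hasDerivAt_sub_mul_deriv {f f1 : ℝ → ℝ} {f2 y : ℝ}
    (hf : HasDerivAt f (f1 y) y) (hf1 : HasDerivAt f1 f2 y) :
    HasDerivAt (fun y => f y - y * f1 y) (-(y * f2)) y := by
  refine (hf.sub ((hasDerivAt_id y).mul hf1)).congr_deriv ?_
  simp only [id_eq]
  ring

theorem hasDerivAt_neg_div_two_mul (α : ℝ) {y : ℝ} (hy : y ≠ 0) :
    HasDerivAt (fun y : ℝ => -(α / (2 * y))) (α / (2 * y ^ 2)) y := by
  have hfun : (fun y : ℝ => -(α / (2 * y))) = fun y => -α / 2 * y⁻¹ := by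
    ext y
    ring
  rw [hfun]
  refine ((hasDerivAt_inv hy).const_mul (-α / 2)).congr_deriv ?_
  field_simp

theorem hasDerivAt_profileEnergy {m α y : ℝ} {f f1 f2 f3 : ℝ → ℝ} {f4 : ℝ}
    (hy : y ≠ 0) (hfy : f y ≠ 0)
    (hd1 : HasDerivAt f (f1 y) y) (hd2 : HasDerivAt f1 (f2 y) y)
    (hd3 : HasDerivAt f2 (f3 y) y) (hd4 : HasDerivAt f3 f4 y)
    (hODE : α * (f y - y * f1 y) + m * f y ^ (m - 1) * f1 y * f3 y + f y ^ m * f4 = 0) :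
    HasDerivAt (profileEnergy m α f f1 f2 f3)
      (α / (2 * y ^ 2) * (f y - y * f1 y) ^ 2 + f y ^ m * f3 y ^ 2) y := by
  have hsq := (hasDerivAt_neg_div_two_mul α hy).mul
    ((hasDerivAt_sub_mul_deriv hd1 hd2).pow 2)
  have hprod := (((hd1.rpow_const (p := m) (Or.inl hfy)).mul hd3).mul hd4)
  refine (hsq.add hprod).congr_deriv ?_
  simp only [Pi.mul_apply, Pi.pow_apply]
  field_simp
  linear_combination 2 * y ^ 2 * f2 y * hODE

theorem tendsto_profileEnergy_atBot {m α a b c : ℝ} {f f1 f2 f3 : ℝ → ℝ}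
    (hα : 0 < α) (ha : a ≠ 0)
    (hf : Tendsto f (𝓝[>] 0) (𝓝 a)) (hf1 : Tendsto f1 (𝓝[>] 0) (𝓝 b))
    (hf2 : Tendsto f2 (𝓝[>] 0) (𝓝 c)) (hf3 : Tendsto f3 (𝓝[>] 0) (𝓝 0)) :
    Tendsto (profileEnergy m α f f1 f2 f3) (𝓝[>] 0) atBot := by
  have hu : Tendsto (fun y => α / 2 * (f y - y * f1 y) ^ 2) (𝓝[>] 0)
      (𝓝 (α / 2 * a ^ 2)) := by
    have hy : Tendsto (fun y : ℝ => y) (𝓝[>] 0) (𝓝 0) := nhdsWithin_le_nhds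
    simpa using ((hf.sub (hy.mul hf1)).pow 2).const_mul (α / 2)
  have hsing : Tendsto (fun y => α / (2 * y) * (f y - y * f1 y) ^ 2) (𝓝[>] 0) atTop := by
    refine (tendsto_inv_nhdsGT_zero.atTop_mul_pos (by positivity) hu).congr fun y => ?_
    rw [div_mul_eq_div_div, div_eq_mul_inv (α / 2)]
    ring
  have hvanish : Tendsto (fun y => f y ^ m * f2 y * f3 y) (𝓝[>] 0) (𝓝 0) := by
    simpa using ((hf.rpow_const (p := m) (Or.inl ha)).mul hf2).mul hf3
  refine ((tendsto_neg_atTop_atBot.comp hsing).atBot_add hvanish).congr fun y => ?_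
  simp only [profileEnergy, Function.comp_apply, neg_mul]

theorem ContinuousWithinAt.tendsto_nhdsGT_of_Ico {f : ℝ → ℝ} {a b : ℝ} (hab : a < b)
    (hf : ContinuousWithinAt f (Ico a b) a) : Tendsto f (𝓝[>] a) (𝓝 (f a)) := by
  rw [ContinuousWithinAt, nhdsWithin_Ico_eq_nhdsGE hab] at hf
  exact hf.mono_left (nhdsWithin_mono _ Ioi_subset_Ici_self)

theorem stmt11_general (m α : ℝ) (hα : 0 < α)
    (I : Set ℝ) (hIsub : I ⊆ Ioi 0)
    (f f1 f2 f3 f4 : ℝ → ℝ)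
    (hd1 : ∀ y ∈ I, HasDerivAt f (f1 y) y)
    (hd2 : ∀ y ∈ I, HasDerivAt f1 (f2 y) y)
    (hd3 : ∀ y ∈ I, HasDerivAt f2 (f3 y) y)
    (hd4 : ∀ y ∈ I, HasDerivAt f3 (f4 y) y)
    (hpos : ∀ y ∈ I, 0 < f y)
    (hODE : ProfileODE m α I f f1 f3 f4) :
    -- E₂ is differentiable with E₂' = (α/(2y²)) (f − y f')² + f^m f'''²
    (∀ y ∈ I, HasDerivAt
      (fun y => -(α / (2 * y)) * (f y - y * f1 y) ^ 2 + f y ^ m * f2 y * f3 y)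
      (α / (2 * y ^ 2) * (f y - y * f1 y) ^ 2 + f y ^ m * f3 y ^ 2) y) ∧
    -- moreover, for solutions on [0, Y) with the initial conditions:
    (∀ (Y κ : ℝ) (g g1 g2 g3 g4 : ℝ → ℝ), 0 < Y →
      C4On (Ico 0 Y) g g1 g2 g3 g4 →
      (∀ y ∈ Ico (0 : ℝ) Y, 0 < g y) →
      ProfileODE m α (Ioo 0 Y) g g1 g3 g4 →
      g 0 = 1 → g1 0 = 0 → g2 0 = κ → g3 0 = 0 →
      Tendsto (fun y => -(α / (2 * y)) * (g y - y * g1 y) ^ 2 + g y ^ m * g2 y * g3 y)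
        (𝓝[>] 0) atBot) := by
  refine ⟨fun y hy => ?_, fun Y κ g g1 g2 g3 g4 hY hC4 _ _ hg0 hg10 hg20 hg30 => ?_⟩
  · exact hasDerivAt_profileEnergy (hIsub hy).ne' (hpos y hy).ne'
      (hd1 y hy) (hd2 y hy) (hd3 y hy) (hd4 y hy) (hODE y hy)
  · obtain ⟨hg, hg1, hg2, hg3, -⟩ := hC4
    have h0 : (0 : ℝ) ∈ Ico 0 Y := ⟨le_rfl, hY⟩
    refine tendsto_profileEnergy_atBot (m := m) (b := 0) (c := κ) hα one_ne_zero ?_ ?_ ?_ ?_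
    · simpa [hg0] using (hg 0 h0).continuousWithinAt.tendsto_nhdsGT_of_Ico hY
    · simpa [hg10] using (hg1 0 h0).continuousWithinAt.tendsto_nhdsGT_of_Ico hY
    · simpa [hg20] using (hg2 0 h0).continuousWithinAt.tendsto_nhdsGT_of_Ico hY
    · simpa [hg30] using (hg3 0 h0).continuousWithinAt.tendsto_nhdsGT_of_Ico hY

theorem stmt11 (m α : ℝ) (hm0 : 0 < m) (hm4 : m ≤ 4) (hα : 0 < α)
    (I : Set ℝ) (hI : IsOpen I) (hIsub : I ⊆ Ioi 0)
    (f f1 f2 f3 f4 : ℝ → ℝ)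
    (hd1 : ∀ y ∈ I, HasDerivAt f (f1 y) y)
    (hd2 : ∀ y ∈ I, HasDerivAt f1 (f2 y) y)
    (hd3 : ∀ y ∈ I, HasDerivAt f2 (f3 y) y)
    (hd4 : ∀ y ∈ I, HasDerivAt f3 (f4 y) y)
    (hc : ContinuousOn f4 I)
    (hpos : ∀ y ∈ I, 0 < f y)
    (hODE : ProfileODE m α I f f1 f3 f4) :
    -- E₂ is differentiable with E₂' = (α/(2y²)) (f − y f')² + f^m f'''²
    (∀ y ∈ I, HasDerivAt
      (fun y => -(α / (2 * y)) * (f y - y * f1 y) ^ 2 + f y ^ m * f2 y * f3 y)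
      (α / (2 * y ^ 2) * (f y - y * f1 y) ^ 2 + f y ^ m * f3 y ^ 2) y) ∧
    -- moreover, for solutions on [0, Y) with the initial conditions:
    (∀ (Y κ : ℝ) (g g1 g2 g3 g4 : ℝ → ℝ), 0 < Y →
      C4On (Ico 0 Y) g g1 g2 g3 g4 →
      (∀ y ∈ Ico (0 : ℝ) Y, 0 < g y) →
      ProfileODE m α (Ioo 0 Y) g g1 g3 g4 →
      g 0 = 1 → g1 0 = 0 → g2 0 = κ → g3 0 = 0 →
      Tendsto (fun y => -(α / (2 * y)) * (g y - y * g1 y) ^ 2 + g y ^ m * g2 y * g3 y)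
        (𝓝[>] 0) atBot) :=
  stmt11_general m α hα I hIsub f f1 f2 f3 f4 hd1 hd2 hd3 hd4 hpos hODE
end
end

section
/- Let m ∈ (0,4], α > 0 and κ ≥ 0. Let f : [0, Y) → ℝ (Y > 0) be a four-times continuously differentiable function with f > 0, satisfying the self-similar profile equation α·(f − y f') + m f^{m−1} f' f''' + f^m f'''' = 0 on (0, Y) and the initial conditions f(0) = 1, f'(0) = 0, f''(0) = κ, f'''(0) = 0. If f'(y*) < 0 for some y* ∈ (0, Y), then the Σ₋ condition holds at y*: y*·f'(y*) < f(y*), f''(y*) < 0 and f'''(y*) < 0. -/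
/-!
Write `h = f - y f'` (`intercept`) and `G = f^m f'''` (`flux`), so that the equation reads
`G' = -α h`, while `h' = -y f''` and `f'''` has the sign of `G`. Let `w < y*` be the point where
`f'` first turns negative: `f'(w) = 0`, `f''(w) ≤ 0` and `f' ≥ 0` on `[0, w]`.

The quantity `Ξ = (y f'' - f') G - α h²/2 + α f²/2` (`lyapunov`) vanishes at `0` and has
derivative `y f^m f'''² + α f' (2f - y f')`; since `f''''(0) = -α`, it is strictly positive on
`(0, b]` as long as `f' ≥ 0` and `2f - y f' ≥ 0` on `[0, b]`. If `2f - y f'` vanished first at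
`ξ < w`, then `Ξ(ξ) = (ξ f'' - f') G > 0` would force `f'' > 0`, `h < 0`, `G > 0` at `ξ`, a
sign pattern the system for `(f'', h, G)` preserves, contradicting `f''(w) ≤ 0`. Hence
`Ξ(w) = w f''(w) G(w) > 0`, so `f'''(w) ≤ 0`. From `w` on, the opposite pattern
`f'' ≤ 0`, `h > 0`, `G ≤ 0` is preserved and becomes strict, which gives `f''(y*) < 0` and
`f'''(y*) < 0`.
-/

open Set Filter Topology MeasureTheory

noncomputable section

section

theorem forall_hasDerivWithinAt_mono {F F' : ℝ → ℝ} {s t : Set ℝ}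
    (h : ∀ y ∈ s, HasDerivWithinAt F (F' y) s y) (hts : t ⊆ s) :
    ∀ y ∈ t, HasDerivWithinAt F (F' y) t y :=
  fun y hy ↦ (h y (hts hy)).mono hts

variable {f f' : ℝ → ℝ} {a b : ℝ}

theorem monotoneOn_Icc_of_hasDerivWithinAt_nonneg
    (hf : ∀ x ∈ Icc a b, HasDerivWithinAt f (f' x) (Icc a b) x)
    (h : ∀ x ∈ Ioo a b, 0 ≤ f' x) :
    MonotoneOn f (Icc a b) :=
  monotoneOn_of_hasDerivWithinAt_nonneg (convex_Icc a b) (fun x hx ↦ (hf x hx).continuousWithinAt)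
    (fun x hx ↦ (hf x (interior_subset hx)).mono interior_subset) (by rwa [interior_Icc])

theorem antitoneOn_Icc_of_hasDerivWithinAt_nonpos
    (hf : ∀ x ∈ Icc a b, HasDerivWithinAt f (f' x) (Icc a b) x)
    (h : ∀ x ∈ Ioo a b, f' x ≤ 0) :
    AntitoneOn f (Icc a b) :=
  antitoneOn_of_hasDerivWithinAt_nonpos (convex_Icc a b) (fun x hx ↦ (hf x hx).continuousWithinAt)
    (fun x hx ↦ (hf x (interior_subset hx)).mono interior_subset) (by rwa [interior_Icc])

theorem strictMonoOn_Icc_of_hasDerivWithinAt_pos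
    (hf : ∀ x ∈ Icc a b, HasDerivWithinAt f (f' x) (Icc a b) x)
    (h : ∀ x ∈ Ioo a b, 0 < f' x) :
    StrictMonoOn f (Icc a b) :=
  strictMonoOn_of_hasDerivWithinAt_pos (convex_Icc a b) (fun x hx ↦ (hf x hx).continuousWithinAt)
    (fun x hx ↦ (hf x (interior_subset hx)).mono interior_subset) (by rwa [interior_Icc])

theorem strictAntiOn_Icc_of_hasDerivWithinAt_neg
    (hf : ∀ x ∈ Icc a b, HasDerivWithinAt f (f' x) (Icc a b) x)
    (h : ∀ x ∈ Ioo a b, f' x < 0) :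
    StrictAntiOn f (Icc a b) :=
  strictAntiOn_of_hasDerivWithinAt_neg (convex_Icc a b) (fun x hx ↦ (hf x hx).continuousWithinAt)
    (fun x hx ↦ (hf x (interior_subset hx)).mono interior_subset) (by rwa [interior_Icc])

theorem neg_of_neg_of_continuation (hf : ContinuousOn f (Icc a b)) (ha : f a < 0)
    (hstep : ∀ c ∈ Ioc a b, (∀ t ∈ Ico a c, f t < 0) → f c < 0) :
    ∀ t ∈ Icc a b, f t < 0 := by
  by_contra! hT
  set T := {t ∈ Icc a b | 0 ≤ f t}
  have hTne : T.Nonempty := hT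
  have hTbdd : BddBelow T := ⟨a, fun t ht ↦ ht.1.1⟩
  have hcT : sInf T ∈ T :=
    (hf.preimage_isClosed_of_isClosed isClosed_Icc isClosed_Ici).csInf_mem hTne hTbdd
  have hac : a < sInf T := hcT.1.1.lt_of_ne (by rintro h; linarith [h ▸ hcT.2])
  refine (hstep _ ⟨hac, hcT.1.2⟩ fun t ht ↦ ?_).not_ge hcT.2
  by_contra! hft
  exact notMem_of_lt_csInf ht.2 hTbdd ⟨⟨ht.1, ht.2.le.trans hcT.1.2⟩, hft⟩

theorem exists_zero_deriv_nonpos_of_nonneg_of_neg (hab : a ≤ b)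
    (hf : ∀ x ∈ Icc a b, HasDerivWithinAt f (f' x) (Icc a b) x) (ha : 0 ≤ f a)
    (hb : f b < 0) :
    ∃ w ∈ Ico a b, f w = 0 ∧ f' w ≤ 0 ∧ ∀ t ∈ Icc a w, 0 ≤ f t := by
  set T := {t ∈ Icc a b | f t < 0}
  have hTne : T.Nonempty := ⟨b, ⟨hab, le_rfl⟩, hb⟩
  have hTbdd : BddBelow T := ⟨a, fun t ht ↦ ht.1.1⟩
  set w := sInf T
  have haw : a ≤ w := le_csInf hTne fun t ht ↦ ht.1.1
  have hwb : w ≤ b := csInf_le hTbdd ⟨⟨hab, le_rfl⟩, hb⟩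
  have hleft : ∀ t ∈ Ico a w, 0 ≤ f t := fun t ht ↦
    not_lt.1 fun hft ↦ notMem_of_lt_csInf ht.2 hTbdd ⟨⟨ht.1, ht.2.le.trans hwb⟩, hft⟩
  have hfw : 0 ≤ f w := by
    rcases haw.eq_or_lt with h | hlt
    · exact h ▸ ha
    have : (𝓝[Ico a w] w).NeBot := by rw [nhdsWithin_Ico_eq_nhdsLT hlt]; infer_instance
    refine ge_of_tendsto (((hf w ⟨haw, hwb⟩).continuousWithinAt).mono
      fun t (ht : t ∈ Ico a w) ↦ ⟨ht.1, ht.2.le.trans hwb⟩) ?_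
    filter_upwards [self_mem_nhdsWithin] using hleft
  have hwb' : w < b := hwb.lt_of_ne fun h ↦ by linarith [h ▸ hfw]
  have hfreq : ∃ᶠ t in 𝓝[>] w, f t < 0 := by
    refine frequently_iff.2 fun hU ↦ ?_
    obtain ⟨c, hwc, hcU⟩ := mem_nhdsGT_iff_exists_Ioo_subset.1 hU
    obtain ⟨t, htT, htc⟩ := exists_lt_of_csInf_lt hTne hwc
    have hwt : w < t := (csInf_le hTbdd htT).lt_of_ne fun h ↦ by linarith [h ▸ htT.2]
    exact ⟨t, hcU ⟨hwt, htc⟩, htT.2⟩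
  have hright : 𝓝[>] w ≤ 𝓝[Icc a b \ {w}] w := by
    rw [← nhdsWithin_Ioo_eq_nhdsGT hwb']
    exact nhdsWithin_mono _ fun t ht ↦ ⟨⟨haw.trans ht.1.le, ht.2.le⟩, ht.1.ne'⟩
  have hfw0 : f w = 0 := le_antisymm (le_of_tendsto_of_frequently
    (((hf w ⟨haw, hwb⟩).continuousWithinAt).mono_left (hright.trans (nhdsWithin_mono _
      sdiff_subset))) (hfreq.mono fun _ ↦ le_of_lt)) hfw
  refine ⟨w, ⟨haw, hwb'⟩, hfw0, ?_, fun t ht ↦ ?_⟩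
  · refine le_of_tendsto_of_frequently
      ((hasDerivWithinAt_iff_tendsto_slope.1 (hf w ⟨haw, hwb⟩)).mono_left hright) ?_
    refine (hfreq.and_eventually self_mem_nhdsWithin).mono fun t ⟨hft, hwt⟩ ↦ ?_
    rw [slope_def_field, hfw0, sub_zero]
    exact div_nonpos_of_nonpos_of_nonneg hft.le (sub_nonneg.2 (le_of_lt hwt))
  · rcases ht.2.lt_or_eq with h | rfl
    exacts [hleft t ⟨ht.1, h⟩, hfw]

end

/-- While `v < 0`, `g` increases, so `p ≥ 0` and `u` increases, so `v` decreases: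
the sign pattern `u ≥ 0, v < 0, g ≥ 0` is forward invariant. -/
theorem pos_of_nonneg_of_neg_of_nonneg {u p v g q : ℝ → ℝ} {α a b : ℝ} (hα : 0 < α)
    (ha : 0 ≤ a) (hab : a < b)
    (hu : ∀ y ∈ Icc a b, HasDerivWithinAt u (p y) (Icc a b) y)
    (hv : ∀ y ∈ Icc a b, HasDerivWithinAt v (-(y * u y)) (Icc a b) y)
    (hg : ∀ y ∈ Icc a b, HasDerivWithinAt g (-(α * v y)) (Icc a b) y)
    (hgq : ∀ y ∈ Icc a b, g y = q y * p y) (hq : ∀ y ∈ Icc a b, 0 < q y)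
    (hua : 0 ≤ u a) (hva : v a < 0) (hga : 0 ≤ g a) :
    0 < u b ∧ 0 < g b := by
  have hv_neg : ∀ t ∈ Icc a b, v t < 0 := by
    refine neg_of_neg_of_continuation (fun y hy ↦ (hv y hy).continuousWithinAt) hva
      fun c hc hneg ↦ ?_
    have hsub : Icc a c ⊆ Icc a b := Icc_subset_Icc_right hc.2
    have hg_mono : MonotoneOn g (Icc a c) :=
      monotoneOn_Icc_of_hasDerivWithinAt_nonneg (forall_hasDerivWithinAt_mono hg hsub)
        fun y hy ↦ by nlinarith [hneg y (Ioo_subset_Ico_self hy)]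
    have hu_mono : MonotoneOn u (Icc a c) := by
      refine monotoneOn_Icc_of_hasDerivWithinAt_nonneg (forall_hasDerivWithinAt_mono hu hsub)
        fun y hy ↦ ?_
      have hy' := Ioo_subset_Icc_self hy
      have hgy : 0 ≤ q y * p y :=
        hgq y (hsub hy') ▸ hga.trans (hg_mono (left_mem_Icc.2 hc.1.le) hy' hy.1.le)
      exact nonneg_of_mul_nonneg_right (by linarith) (hq y (hsub hy'))
    have hv_anti : AntitoneOn v (Icc a c) := by
      refine antitoneOn_Icc_of_hasDerivWithinAt_nonpos (forall_hasDerivWithinAt_mono hv hsub)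
        fun y hy ↦ ?_
      have := hua.trans (hu_mono (left_mem_Icc.2 hc.1.le) (Ioo_subset_Icc_self hy) hy.1.le)
      nlinarith [hy.1]
    exact (hv_anti (left_mem_Icc.2 hc.1.le) (right_mem_Icc.2 hc.1.le) hc.1.le).trans_lt hva
  have hg_strict : StrictMonoOn g (Icc a b) :=
    strictMonoOn_Icc_of_hasDerivWithinAt_pos hg fun y hy ↦
      by nlinarith [hv_neg y (Ioo_subset_Icc_self hy)]
  have hg_pos : ∀ y ∈ Ioc a b, 0 < g y := fun y hy ↦
    hga.trans_lt (hg_strict (left_mem_Icc.2 hab.le) (Ioc_subset_Icc_self hy) hy.1)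
  have hu_strict : StrictMonoOn u (Icc a b) := by
    refine strictMonoOn_Icc_of_hasDerivWithinAt_pos hu fun y hy ↦ ?_
    have hgy := hgq y (Ioo_subset_Icc_self hy) ▸ hg_pos y (Ioo_subset_Ioc_self hy)
    exact pos_of_mul_pos_right hgy (hq y (Ioo_subset_Icc_self hy)).le
  exact ⟨hua.trans_lt (hu_strict (left_mem_Icc.2 hab.le) (right_mem_Icc.2 hab.le) hab),
    hg_pos b (right_mem_Ioc.2 hab)⟩

structure ProfileSolution (m α Y : ℝ) (f f1 f2 f3 f4 : ℝ → ℝ) : Prop where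
  hasDerivWithinAt_f : ∀ y ∈ Ico 0 Y, HasDerivWithinAt f (f1 y) (Ico 0 Y) y
  hasDerivWithinAt_f1 : ∀ y ∈ Ico 0 Y, HasDerivWithinAt f1 (f2 y) (Ico 0 Y) y
  hasDerivWithinAt_f2 : ∀ y ∈ Ico 0 Y, HasDerivWithinAt f2 (f3 y) (Ico 0 Y) y
  hasDerivWithinAt_f3 : ∀ y ∈ Ico 0 Y, HasDerivWithinAt f3 (f4 y) (Ico 0 Y) y
  continuousOn_f4 : ContinuousOn f4 (Ico 0 Y)
  pos : ∀ y ∈ Ico 0 Y, 0 < f y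
  ode : ProfileODE m α (Ioo 0 Y) f f1 f3 f4
  f_zero : f 0 = 1
  f1_zero : f1 0 = 0
  f3_zero : f3 0 = 0

namespace ProfileSolution

def intercept (f f1 : ℝ → ℝ) (y : ℝ) : ℝ := f y - y * f1 y

def flux (m : ℝ) (f f3 : ℝ → ℝ) (y : ℝ) : ℝ := f y ^ m * f3 y

def lyapunov (m α : ℝ) (f f1 f2 f3 : ℝ → ℝ) (y : ℝ) : ℝ :=
  (y * f2 y - f1 y) * flux m f f3 y - α * intercept f f1 y ^ 2 / 2 + α * f y ^ 2 / 2

variable {m α Y : ℝ} {f f1 f2 f3 f4 : ℝ → ℝ}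

theorem continuousOn_f (hs : ProfileSolution m α Y f f1 f2 f3 f4) : ContinuousOn f (Ico 0 Y) :=
  fun y hy ↦ (hs.hasDerivWithinAt_f y hy).continuousWithinAt

theorem continuousOn_f1 (hs : ProfileSolution m α Y f f1 f2 f3 f4) : ContinuousOn f1 (Ico 0 Y) :=
  fun y hy ↦ (hs.hasDerivWithinAt_f1 y hy).continuousWithinAt

theorem continuousOn_f3 (hs : ProfileSolution m α Y f f1 f2 f3 f4) : ContinuousOn f3 (Ico 0 Y) :=
  fun y hy ↦ (hs.hasDerivWithinAt_f3 y hy).continuousWithinAt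

theorem continuousOn_rpow (hs : ProfileSolution m α Y f f1 f2 f3 f4) (p : ℝ) :
    ContinuousOn (fun y ↦ f y ^ p) (Ico 0 Y) :=
  hs.continuousOn_f.rpow_const fun y hy ↦ Or.inl (hs.pos y hy).ne'

theorem ode_Ico (hs : ProfileSolution m α Y f f1 f2 f3 f4) :
    ProfileODE m α (Ico 0 Y) f f1 f3 f4 := by
  intro y hy
  have hY : (0 : ℝ) ≠ Y := (hy.1.trans_lt hy.2).ne
  refine Set.EqOn.of_subset_closure (f := fun y ↦ α * (f y - y * f1 y) +
      m * f y ^ (m - 1) * f1 y * f3 y + f y ^ m * f4 y) (g := fun _ ↦ 0) hs.ode ?_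
    continuousOn_const Ioo_subset_Ico_self (by rw [closure_Ioo hY]; exact Ico_subset_Icc_self) hy
  exact ((continuousOn_const.mul (hs.continuousOn_f.sub (continuousOn_id.mul
    hs.continuousOn_f1))).add (((continuousOn_const.mul (hs.continuousOn_rpow _)).mul
    hs.continuousOn_f1).mul hs.continuousOn_f3)).add
    ((hs.continuousOn_rpow _).mul hs.continuousOn_f4)

theorem f4_zero (hs : ProfileSolution m α Y f f1 f2 f3 f4) (hY : 0 < Y) : f4 0 = -α := by
  have := hs.ode_Ico 0 ⟨le_rfl, hY⟩
  simp only [hs.f_zero, hs.f1_zero, hs.f3_zero, Real.one_rpow] at this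
  linarith

theorem hasDerivWithinAt_intercept (hs : ProfileSolution m α Y f f1 f2 f3 f4) :
    ∀ y ∈ Ico 0 Y, HasDerivWithinAt (intercept f f1) (-(y * f2 y)) (Ico 0 Y) y := fun y hy ↦
  ((hs.hasDerivWithinAt_f y hy).sub ((hasDerivWithinAt_id y _).mul
    (hs.hasDerivWithinAt_f1 y hy))).congr_deriv (by simp only [id]; ring)

theorem hasDerivWithinAt_flux (hs : ProfileSolution m α Y f f1 f2 f3 f4) :
    ∀ y ∈ Ico 0 Y, HasDerivWithinAt (flux m f f3) (-(α * intercept f f1 y)) (Ico 0 Y) y :=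
  fun y hy ↦ (((hs.hasDerivWithinAt_f y hy).rpow_const (p := m) (Or.inl (hs.pos y hy).ne')).mul
    (hs.hasDerivWithinAt_f3 y hy)).congr_deriv (by
      simp only [intercept]; linear_combination hs.ode_Ico y hy)

theorem hasDerivWithinAt_lyapunov (hs : ProfileSolution m α Y f f1 f2 f3 f4) :
    ∀ y ∈ Ico 0 Y, HasDerivWithinAt (lyapunov m α f f1 f2 f3)
      (y * (f y ^ m * f3 y ^ 2) + α * f1 y * (f y + intercept f f1 y)) (Ico 0 Y) y := by
  intro y hy
  have hG := hs.hasDerivWithinAt_flux y hy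
  have hh := hs.hasDerivWithinAt_intercept y hy
  refine (((((((hasDerivWithinAt_id y _).mul (hs.hasDerivWithinAt_f2 y hy)).sub
    (hs.hasDerivWithinAt_f1 y hy)).mul hG).sub ((hh.pow 2).const_mul α |>.div_const 2)).add
    (((hs.hasDerivWithinAt_f y hy).pow 2).const_mul α |>.div_const 2))).congr_deriv ?_
  simp only [Pi.mul_apply, Pi.sub_apply, id, flux, intercept]
  ring

theorem exists_f3_neg (hs : ProfileSolution m α Y f f1 f2 f3 f4) (hα : 0 < α) (hY : 0 < Y) :
    ∃ δ ∈ Ioo 0 Y, ∀ t ∈ Ioc 0 δ, f3 t < 0 := by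
  have hf4 : ∀ᶠ t in 𝓝[≥] 0, f4 t < 0 := by
    have := hs.continuousOn_f4 0 ⟨le_rfl, hY⟩
    rw [ContinuousWithinAt, nhdsWithin_Ico_eq_nhdsGE hY, hs.f4_zero hY] at this
    exact this.eventually_lt_const (neg_neg_of_pos hα)
  obtain ⟨u, hu, hsub⟩ := mem_nhdsGE_iff_exists_Icc_subset.1 hf4
  set δ := min u (Y / 2)
  have hδ : δ ∈ Ioo 0 Y :=
    ⟨lt_min hu (half_pos hY), (min_le_right _ _).trans_lt (half_lt_self hY)⟩
  have hanti : StrictAntiOn f3 (Icc 0 δ) :=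
    strictAntiOn_Icc_of_hasDerivWithinAt_neg (forall_hasDerivWithinAt_mono hs.hasDerivWithinAt_f3
      fun t ht ↦ ⟨ht.1, ht.2.trans_lt hδ.2⟩)
      fun t ht ↦ hsub ⟨ht.1.le, ht.2.le.trans (min_le_left _ _)⟩
  refine ⟨δ, hδ, fun t ht ↦ ?_⟩
  simpa [hs.f3_zero] using hanti (left_mem_Icc.2 hδ.1.le) (Ioc_subset_Icc_self ht) ht.1

theorem lyapunov_zero (hs : ProfileSolution m α Y f f1 f2 f3 f4) :
    lyapunov m α f f1 f2 f3 0 = 0 := by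
  simp [lyapunov, intercept, hs.f_zero, hs.f1_zero]

theorem lyapunov_pos (hs : ProfileSolution m α Y f f1 f2 f3 f4) (hα : 0 < α) {b : ℝ}
    (hb : b ∈ Ioo 0 Y) (hf1 : ∀ t ∈ Icc 0 b, 0 ≤ f1 t)
    (hΦ : ∀ t ∈ Icc 0 b, 0 ≤ f t + intercept f f1 t) :
    0 < lyapunov m α f f1 f2 f3 b := by
  obtain ⟨δ, hδ, hf3⟩ := hs.exists_f3_neg hα (hb.1.trans hb.2)
  set d := min δ b
  have hd : 0 < d := lt_min hδ.1 hb.1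
  have hderiv {c : ℝ} (hc : c ≤ b) := forall_hasDerivWithinAt_mono hs.hasDerivWithinAt_lyapunov
    (fun t (ht : t ∈ Icc 0 c) ↦ ⟨ht.1, ht.2.trans_lt (hc.trans_lt hb.2)⟩)
  have hmono : MonotoneOn (lyapunov m α f f1 f2 f3) (Icc 0 b) := by
    refine monotoneOn_Icc_of_hasDerivWithinAt_nonneg (hderiv le_rfl) fun t ht ↦ ?_
    have htb : t ∈ Icc 0 b := Ioo_subset_Icc_self ht
    have hfm : 0 ≤ f t ^ m := Real.rpow_nonneg (hs.pos t ⟨ht.1.le, ht.2.trans hb.2⟩).le m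
    exact add_nonneg (mul_nonneg ht.1.le (mul_nonneg hfm (sq_nonneg _)))
      (mul_nonneg (mul_nonneg hα.le (hf1 t htb)) (hΦ t htb))
  have hstrict : StrictMonoOn (lyapunov m α f f1 f2 f3) (Icc 0 d) := by
    refine strictMonoOn_Icc_of_hasDerivWithinAt_pos (hderiv (min_le_right _ _)) fun t ht ↦ ?_
    have htb : t ∈ Icc 0 b := ⟨ht.1.le, ht.2.le.trans (min_le_right _ _)⟩
    have hfm : 0 < f t ^ m := Real.rpow_pos_of_pos (hs.pos t ⟨htb.1, htb.2.trans_lt hb.2⟩) m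
    have hf3t : f3 t < 0 := hf3 t ⟨ht.1, ht.2.le.trans (min_le_left _ _)⟩
    exact add_pos_of_pos_of_nonneg (mul_pos ht.1 (mul_pos hfm (sq_pos_of_neg hf3t)))
      (mul_nonneg (mul_nonneg hα.le (hf1 t htb)) (hΦ t htb))
  calc 0 = lyapunov m α f f1 f2 f3 0 := hs.lyapunov_zero.symm
    _ < lyapunov m α f f1 f2 f3 d := hstrict (left_mem_Icc.2 hd.le) (right_mem_Icc.2 hd.le) hd
    _ ≤ lyapunov m α f f1 f2 f3 b :=
      hmono ⟨hd.le, min_le_right _ _⟩ (right_mem_Icc.2 hb.1.le) (min_le_right _ _)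

theorem add_intercept_nonneg (hs : ProfileSolution m α Y f f1 f2 f3 f4) (hα : 0 < α) {w : ℝ}
    (hw : w ∈ Ico 0 Y) (hf2w : f2 w ≤ 0) (hf1 : ∀ t ∈ Icc 0 w, 0 ≤ f1 t) :
    ∀ t ∈ Icc 0 w, 0 ≤ f t + intercept f f1 t := by
  by_contra! ⟨t, ht, hΦt⟩
  have hsub {a b : ℝ} (ha : 0 ≤ a) (hb : b ≤ w) : Icc a b ⊆ Ico 0 Y :=
    fun s hs ↦ ⟨ha.trans hs.1, (hs.2.trans hb).trans_lt hw.2⟩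
  have hΦ0 : f 0 + intercept f f1 0 = 2 := by norm_num [intercept, hs.f_zero]
  obtain ⟨ξ, hξ, hΦξ, hΦ'ξ, hΦ⟩ := exists_zero_deriv_nonpos_of_nonneg_of_neg ht.1
    (forall_hasDerivWithinAt_mono (fun y hy ↦ (hs.hasDerivWithinAt_f y hy).add
      (hs.hasDerivWithinAt_intercept y hy)) (hsub le_rfl ht.2)) (by simp [hΦ0]) hΦt
  rw [Pi.add_apply] at hΦξ
  have hξ0 : 0 < ξ := hξ.1.lt_of_ne fun h ↦ by simp [← h, hΦ0] at hΦξ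
  have hξw : ξ < w := hξ.2.trans_le ht.2
  have hfξ : 0 < f ξ := hs.pos ξ (hsub le_rfl hξw.le ⟨hξ0.le, le_rfl⟩)
  have hL := hs.lyapunov_pos hα ⟨hξ0, hξw.trans hw.2⟩
    (fun s hs ↦ hf1 s ⟨hs.1, hs.2.trans hξw.le⟩) hΦ
  have hint : intercept f f1 ξ = -f ξ := by linarith
  have hLξ : lyapunov m α f f1 f2 f3 ξ = (ξ * f2 ξ - f1 ξ) * flux m f f3 ξ := by
    simp only [lyapunov, hint]; ring
  rw [hLξ] at hL
  have hflux : 0 < flux m f f3 ξ := pos_of_mul_pos_right hL (by linarith)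
  have hξf2 : 0 < ξ * f2 ξ := by
    linarith [pos_of_mul_pos_left hL hflux.le, hf1 ξ ⟨hξ0.le, hξw.le⟩]
  refine (pos_of_nonneg_of_neg_of_nonneg hα hξ0.le hξw
    (forall_hasDerivWithinAt_mono hs.hasDerivWithinAt_f2 (hsub hξ0.le le_rfl))
    (forall_hasDerivWithinAt_mono hs.hasDerivWithinAt_intercept (hsub hξ0.le le_rfl))
    (forall_hasDerivWithinAt_mono hs.hasDerivWithinAt_flux (hsub hξ0.le le_rfl))
    (fun _ _ ↦ rfl) (fun y hy ↦ Real.rpow_pos_of_pos (hs.pos y (hsub hξ0.le le_rfl hy)) m)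
    (pos_of_mul_pos_right hξf2 hξ0.le).le (by linarith) hflux.le).1.not_ge hf2w

theorem f3_nonpos (hs : ProfileSolution m α Y f f1 f2 f3 f4) (hα : 0 < α) {w : ℝ}
    (hw : w ∈ Ico 0 Y) (hf1w : f1 w = 0) (hf2w : f2 w ≤ 0)
    (hf1 : ∀ t ∈ Icc 0 w, 0 ≤ f1 t) :
    f3 w ≤ 0 := by
  rcases hw.1.eq_or_lt with rfl | hw0
  · exact hs.f3_zero.le
  have hL := hs.lyapunov_pos hα ⟨hw0, hw.2⟩ hf1 (hs.add_intercept_nonneg hα hw hf2w hf1)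
  have hLw : lyapunov m α f f1 f2 f3 w = w * f2 w * flux m f f3 w := by
    simp only [lyapunov, intercept, hf1w]; ring
  by_contra! hf3w
  have hflux : 0 < flux m f f3 w := mul_pos (Real.rpow_pos_of_pos (hs.pos w hw) m) hf3w
  exact (hLw ▸ hL).not_ge (mul_nonpos_of_nonpos_of_nonneg
    (mul_nonpos_of_nonneg_of_nonpos hw0.le hf2w) hflux.le)

/-- `(-f'', -h, -G)` satisfies the same system as `(f'', h, G)`. -/
theorem f2_neg_and_f3_neg (hs : ProfileSolution m α Y f f1 f2 f3 f4) (hα : 0 < α) {w y : ℝ}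
    (hw : 0 ≤ w) (hwy : w < y) (hy : y < Y) (hintw : 0 < intercept f f1 w) (hf2w : f2 w ≤ 0)
    (hf3w : f3 w ≤ 0) :
    f2 y < 0 ∧ f3 y < 0 := by
  have hsub : Icc w y ⊆ Ico 0 Y := fun t ht ↦ ⟨hw.trans ht.1, ht.2.trans_lt hy⟩
  have hfm {t : ℝ} (ht : t ∈ Icc w y) : 0 < f t ^ m :=
    Real.rpow_pos_of_pos (hs.pos t (hsub ht)) m
  obtain ⟨hf2y, hfluxy⟩ := pos_of_nonneg_of_neg_of_nonneg hα hw hwy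
    (fun t ht ↦ (hs.hasDerivWithinAt_f2 t (hsub ht)).neg.mono hsub)
    (fun t ht ↦ ((hs.hasDerivWithinAt_intercept t (hsub ht)).neg.mono hsub).congr_deriv
      (by rw [Pi.neg_apply]; ring))
    (fun t ht ↦ ((hs.hasDerivWithinAt_flux t (hsub ht)).neg.mono hsub).congr_deriv
      (by rw [Pi.neg_apply]; ring))
    (fun t _ ↦ (mul_neg (f t ^ m) (f3 t)).symm) (fun t ht ↦ hfm ht)
    (neg_nonneg.2 hf2w) (neg_lt_zero.2 hintw)
    (neg_nonneg.2 (mul_nonpos_of_nonneg_of_nonpos (hfm (left_mem_Icc.2 hwy.le)).le hf3w))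
  rw [Pi.neg_apply, neg_pos] at hf2y hfluxy
  exact ⟨hf2y, neg_of_mul_neg_right hfluxy (hfm (right_mem_Icc.2 hwy.le)).le⟩

end ProfileSolution

open ProfileSolution in
theorem stmt12_general (m α : ℝ) (hα : 0 < α)
    (Y : ℝ) (f f1 f2 f3 f4 : ℝ → ℝ)
    (hC4 : C4On (Ico 0 Y) f f1 f2 f3 f4)
    (hpos : ∀ y ∈ Ico (0 : ℝ) Y, 0 < f y)
    (hODE : ProfileODE m α (Ioo 0 Y) f f1 f3 f4)
    (hf0 : f 0 = 1) (hf1 : f1 0 = 0) (hf3 : f3 0 = 0)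
    (ys : ℝ) (hys : ys ∈ Ioo (0 : ℝ) Y) (hneg : f1 ys < 0) :
    ys * f1 ys < f ys ∧ f2 ys < 0 ∧ f3 ys < 0 := by
  obtain ⟨hd0, hd1, hd2, hd3, hc4⟩ := hC4
  have hs : ProfileSolution m α Y f f1 f2 f3 f4 :=
    ⟨hd0, hd1, hd2, hd3, hc4, hpos, hODE, hf0, hf1, hf3⟩
  obtain ⟨w, hw, hf1w, hf2w, hf1nn⟩ := exists_zero_deriv_nonpos_of_nonneg_of_neg hys.1.le
    (forall_hasDerivWithinAt_mono hd1 fun t ht ↦ ⟨ht.1, ht.2.trans_lt hys.2⟩) hf1.ge hneg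
  have hwY : w ∈ Ico 0 Y := ⟨hw.1, hw.2.trans hys.2⟩
  have hintw : 0 < intercept f f1 w := by simp [intercept, hf1w, hpos w hwY]
  obtain ⟨hf2ys, hf3ys⟩ := hs.f2_neg_and_f3_neg hα hw.1 hw.2 hys.2 hintw hf2w
    (hs.f3_nonpos hα hwY hf1w hf2w hf1nn)
  exact ⟨(mul_neg_of_pos_of_neg hys.1 hneg).trans (hpos ys ⟨hys.1.le, hys.2⟩), hf2ys, hf3ys⟩

theorem stmt12 (m α κ : ℝ) (hm0 : 0 < m) (hm4 : m ≤ 4) (hα : 0 < α) (hκ : 0 ≤ κ)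
    (Y : ℝ) (hY : 0 < Y) (f f1 f2 f3 f4 : ℝ → ℝ)
    (hC4 : C4On (Ico 0 Y) f f1 f2 f3 f4)
    (hpos : ∀ y ∈ Ico (0 : ℝ) Y, 0 < f y)
    (hODE : ProfileODE m α (Ioo 0 Y) f f1 f3 f4)
    (hf0 : f 0 = 1) (hf1 : f1 0 = 0) (hf2 : f2 0 = κ) (hf3 : f3 0 = 0)
    (ys : ℝ) (hys : ys ∈ Ioo (0 : ℝ) Y) (hneg : f1 ys < 0) :
    ys * f1 ys < f ys ∧ f2 ys < 0 ∧ f3 ys < 0 :=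
  stmt12_general m α hα Y f f1 f2 f3 f4 hC4 hpos hODE hf0 hf1 hf3 ys hys hneg
end
end

section
/- Let c > 0 and consider the cubic polynomial p(z) = (1 − z²)(2 + z) + c over the complex numbers. Then p has exactly one root with nonnegative real part; this root is real and strictly greater than 1; p has no purely imaginary roots; and the other two roots of p (counted with multiplicity) both have real part strictly less than −1. -/
/-!
Since `p(1) = c > 0` and `p(x) → -∞` as `x → ∞`, `p` has a real root `r > 1`. Dividing it out
leaves `z² + (r + 2) z + (r² + 2r - 1)`, a real quadratic whose vertex `-(r + 2)/2` lies left of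
`-1` and whose value `r² + r - 2` at `-1` is positive; hence both its roots have real part `< -1`.
-/

open Complex

theorem exists_real_root_gt_one {c : ℝ} (hc : 0 < c) :
    ∃ r : ℝ, 1 < r ∧ r ^ 3 + 2 * r ^ 2 - r - 2 = c := by
  have hcont : ContinuousOn (fun x : ℝ => x ^ 3 + 2 * x ^ 2 - x - 2) (Set.Icc 1 (2 + c)) := by
    fun_prop
  have hmem : c ∈ Set.Icc ((1 : ℝ) ^ 3 + 2 * 1 ^ 2 - 1 - 2)
      ((2 + c) ^ 3 + 2 * (2 + c) ^ 2 - (2 + c) - 2) := by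
    constructor <;> nlinarith
  obtain ⟨r, hr, hrc⟩ := intermediate_value_Icc (by linarith) hcont hmem
  refine ⟨r, hr.1.lt_of_ne ?_, hrc⟩
  rintro rfl
  norm_num at hrc
  linarith

/-- For negative `D` the junk value `Real.sqrt D = 0` is the correct real part. -/
theorem Complex.exists_sq_eq_ofReal_re_eq_sqrt (D : ℝ) :
    ∃ s : ℂ, s ^ 2 = D ∧ s.re = Real.sqrt D := by
  rcases le_or_gt 0 D with hD | hD
  · exact ⟨Real.sqrt D, by rw [← ofReal_pow, Real.sq_sqrt hD], ofReal_re _⟩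
  · refine ⟨Real.sqrt (-D) * I, ?_, by simp [Real.sqrt_eq_zero'.mpr hD.le]⟩
    rw [mul_pow, I_sq, ← ofReal_pow, Real.sq_sqrt (by linarith)]
    push_cast
    ring

theorem Complex.exists_quadratic_factorization_re_lt {b q a : ℝ} (hvertex : -b / 2 < a)
    (hpos : 0 < a ^ 2 + b * a + q) :
    ∃ w₁ w₂ : ℂ, (∀ z : ℂ, z ^ 2 + b * z + q = (z - w₁) * (z - w₂)) ∧ w₁.re < a ∧ w₂.re < a := by
  obtain ⟨s, hs, hsre⟩ := exists_sq_eq_ofReal_re_eq_sqrt (b ^ 2 - 4 * q)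
  have hsqrt : Real.sqrt (b ^ 2 - 4 * q) < 2 * a + b :=
    (Real.sqrt_lt' (by linarith)).mpr (by nlinarith)
  have hs0 : 0 ≤ s.re := hsre ▸ Real.sqrt_nonneg _
  refine ⟨(-b - s) / 2, (-b + s) / 2, fun z => ?_, ?_, ?_⟩
  · push_cast at hs
    linear_combination hs / 4
  · simp only [div_re, sub_re, neg_re, ofReal_re, re_ofNat]
    norm_num
    linarith
  · simp only [div_re, add_re, neg_re, ofReal_re, re_ofNat]
    norm_num
    linarith

theorem stmt18 (c : ℝ) (hc : 0 < c) :
    ∃ (r : ℝ) (z₁ z₂ : ℂ), 1 < r ∧ z₁.re < -1 ∧ z₂.re < -1 ∧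
      -- factorization of p (with leading coefficient −1), so the roots of p counted
      -- with multiplicity are exactly r, z₁, z₂
      (∀ z : ℂ, (1 - z ^ 2) * (2 + z) + (c : ℂ) =
        -((z - (r : ℂ)) * (z - z₁) * (z - z₂))) ∧
      -- r is the unique root with nonnegative real part, and it is real and > 1
      (∀ z : ℂ, (1 - z ^ 2) * (2 + z) + (c : ℂ) = 0 → 0 ≤ z.re → z = (r : ℂ)) ∧
      -- p has no purely imaginary roots
      (∀ z : ℂ, (1 - z ^ 2) * (2 + z) + (c : ℂ) = 0 → z.re ≠ 0) := by
  obtain ⟨r, hr, hrc⟩ := exists_real_root_gt_one hc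
  obtain ⟨z₁, z₂, hquad, hz₁, hz₂⟩ :=
    exists_quadratic_factorization_re_lt (b := r + 2) (q := r ^ 2 + 2 * r - 1) (a := -1)
      (by linarith) (by nlinarith)
  have hfactor : ∀ z : ℂ, (1 - z ^ 2) * (2 + z) + (c : ℂ) =
      -((z - (r : ℂ)) * (z - z₁) * (z - z₂)) := fun z => by
    have hrc' : (r : ℂ) ^ 3 + 2 * (r : ℂ) ^ 2 - r - 2 = c := by exact_mod_cast hrc
    rw [mul_assoc, ← hquad]
    push_cast
    linear_combination -hrc'
  have hroot : ∀ z : ℂ, (1 - z ^ 2) * (2 + z) + (c : ℂ) = 0 → z = r ∨ z = z₁ ∨ z = z₂ := by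
    intro z hz
    simpa only [hfactor, neg_eq_zero, mul_eq_zero, sub_eq_zero, or_assoc] using hz
  refine ⟨r, z₁, z₂, hr, hz₁, hz₂, hfactor, fun z hz hre => ?_, fun z hz => ?_⟩
  · rcases hroot z hz with rfl | rfl | rfl
    · rfl
    all_goals linarith
  · rcases hroot z hz with rfl | rfl | rfl
    · simp only [ofReal_re]; linarith
    all_goals linarith
end
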